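/- arXiv:1501.00754 — 7 statements merged into one kernel-verified Lean document; each statement's English description precedes it below -/
import Mathlib

section
/- The map a ↦ τ'_a is a Lie algebra homomorphism from g into Cl(g,κ) equipped with the commutator bracket: τ'_{[a,b]} = τ'_a·τ'_b − τ'_b·τ'_a for all a, b ∈ g. -/
/-!
For an endomorphism `D` of `g` put `T D = ∑ ι (D eᵢ) ι (e'ᵢ)`, so that `τ'_a = T (ad a) / 4`.
If `D` is `κ`-skew, the Clifford relation turns `⁅T D, ι x⁆` into `2 ι (D x) + 2 ι (D x)`, one
copy from each dual-basis expansion `x = ∑ κ(x, e'ᵢ) eᵢ = ∑ κ(eᵢ, x) e'ᵢ` (the second one holds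
because `e'` is linearly independent of the right cardinality, hence a basis). So `⁅T D, ·⁆` acts
on `T D'` as a derivation, giving `4 T (D D') + 4 ∑ ι (D' eᵢ) ι (D e'ᵢ)`, and skewness moves `D`
from `e'ᵢ` to `eᵢ` at the cost of a sign: `⁅T D, T D'⁆ = 4 T ⁅D, D'⁆`. Invariance of `κ` says
that every `ad a` is skew, and `ad` is a Lie homomorphism.
-/

open CliffordAlgebra

attribute [local instance] LieRing.ofAssociativeRing

section DualBasis

variable {K V M n : Type*} [Field K] [AddCommGroup V] [Module K V] [AddCommGroup M] [Module K M]
  [DecidableEq n] {B : LinearMap.BilinForm K V} {e' : n → V}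

theorem Module.Basis.repr_apply_eq_of_dual {e : Module.Basis n K V}
    (hdual : ∀ i j, B (e i) (e' j) = if i = j then 1 else 0) (x : V) (i : n) :
    e.repr x i = B x (e' i) := by
  have : e.coord i = B.flip (e' i) := e.ext fun j => by simp [hdual, Finsupp.single_apply]
  exact LinearMap.congr_fun this x

theorem Module.Basis.sum_smul_apply_of_dual_left [Fintype n] {e : Module.Basis n K V}
    (hdual : ∀ i j, B (e i) (e' j) = if i = j then 1 else 0) (g : V →ₗ[K] M) (x : V) :
    ∑ i, B x (e' i) • g (e i) = g x := by
  conv_rhs => rw [← e.sum_repr x]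
  simp [e.repr_apply_eq_of_dual hdual]

theorem LinearMap.BilinForm.linearIndependent_of_dual [Fintype n] {e : n → V}
    (hdual : ∀ i j, B (e i) (e' j) = if i = j then 1 else 0) : LinearIndependent K e' := by
  refine Fintype.linearIndependent_iff.mpr fun c hc i => ?_
  simpa [hdual] using congrArg (B (e i)) hc

theorem Module.Basis.sum_smul_apply_of_dual_right [Fintype n] (e : Module.Basis n K V)
    (hdual : ∀ i j, B (e i) (e' j) = if i = j then 1 else 0) (g : V →ₗ[K] M) (x : V) :
    ∑ i, B (e i) x • g (e' i) = g x := by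
  have := Module.Finite.of_basis e
  let b := basisOfLinearIndependentOfCardEqFinrank' e'
    (LinearMap.BilinForm.linearIndependent_of_dual hdual) (Module.finrank_eq_card_basis e).symm
  have hb : ⇑b = e' := Basis.coe_mk _ _
  have hdual' : ∀ i j, B.flip (b i) (e j) = if i = j then 1 else 0 := fun i j => by
    simp [hb, hdual, eq_comm]
  simpa [hb] using b.sum_smul_apply_of_dual_left hdual' g x

-- The Casimir tensor `∑ eᵢ ⊗ e'ᵢ` is killed by `D ⊗ 1 + 1 ⊗ D`.
theorem Module.Basis.sum_apply_map_dual_eq_neg [Fintype n] {e : Module.Basis n K V}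
    (hdual : ∀ i j, B (e i) (e' j) = if i = j then 1 else 0) {D : Module.End K V}
    (hskew : ∀ x y, B (D x) y = -B x (D y)) (β : V →ₗ[K] V →ₗ[K] M) :
    ∑ i, β (e i) (D (e' i)) = -∑ i, β (D (e i)) (e' i) := by
  calc ∑ i, β (e i) (D (e' i)) = ∑ i, ∑ j, B (e j) (D (e' i)) • β (e i) (e' j) := by
        simp only [e.sum_smul_apply_of_dual_right hdual]
    _ = -∑ j, ∑ i, B (D (e j)) (e' i) • β.flip (e' j) (e i) := by
        rw [Finset.sum_comm, ← Finset.sum_neg_distrib]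
        simp only [hskew, neg_neg, neg_smul, Finset.sum_neg_distrib, LinearMap.flip_apply]
    _ = -∑ i, β (D (e i)) (e' i) := by
        congr 1
        exact Finset.sum_congr rfl fun j _ => e.sum_smul_apply_of_dual_left hdual _ _

end DualBasis

section Clifford

variable {R V : Type*} [CommRing R] [AddCommGroup V] [Module R V]
  {B : LinearMap.BilinForm R V}

local notation "Q" => LinearMap.BilinMap.toQuadraticMap B

theorem CliffordAlgebra.lie_ι_mul_ι_ι (hsymm : ∀ x y, B x y = B y x) (u v w : V) :
    ⁅ι Q u * ι Q v, ι Q w⁆ = (2 * B v w) • ι Q u - (2 * B u w) • ι Q v := by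
  have anticomm : ∀ x y, ι Q x * ι Q y = algebraMap R _ (2 * B x y) - ι Q y * ι Q x := fun x y => by
    rw [eq_sub_iff_add_eq, ι_mul_ι_add_swap, LinearMap.BilinMap.polar_toQuadraticMap, hsymm y x,
      two_mul]
  calc ⁅ι Q u * ι Q v, ι Q w⁆ = ι Q u * (ι Q v * ι Q w) - (ι Q w * ι Q u) * ι Q v := by
        rw [Ring.lie_def, mul_assoc, mul_assoc]
    _ = ι Q u * (algebraMap R _ (2 * B v w) - ι Q w * ι Q v)
          - (algebraMap R _ (2 * B u w) - ι Q u * ι Q w) * ι Q v := by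
        rw [anticomm v w, anticomm w u, hsymm w u]
    _ = (2 * B v w) • ι Q u - (2 * B u w) • ι Q v := by
        simp only [mul_sub, sub_mul, ← mul_assoc, ← Algebra.commutes, ← Algebra.smul_def]
        abel

end Clifford

section CliffordOfEnd

variable {K V n : Type*} [Field K] [AddCommGroup V] [Module K V] [Fintype n] [DecidableEq n]

noncomputable def cliffordOfEnd (B : LinearMap.BilinForm K V) (e e' : n → V) (D : Module.End K V) :
    CliffordAlgebra (LinearMap.BilinMap.toQuadraticMap B) :=
  ∑ i, ι _ (D (e i)) * ι _ (e' i)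

variable {B : LinearMap.BilinForm K V} {e : Module.Basis n K V} {e' : n → V}

local notation "Q" => LinearMap.BilinMap.toQuadraticMap B

theorem lie_cliffordOfEnd_ι (hsymm : ∀ x y, B x y = B y x)
    (hdual : ∀ i j, B (e i) (e' j) = if i = j then 1 else 0) {D : Module.End K V}
    (hskew : ∀ x y, B (D x) y = -B x (D y)) (x : V) :
    ⁅cliffordOfEnd B e e' D, ι Q x⁆ = (4 : K) • ι Q (D x) := by
  have hterm : ∀ i, ⁅ι Q (D (e i)) * ι Q (e' i), ι Q x⁆
      = (2 : K) • (B x (e' i) • (ι Q ∘ₗ D) (e i)) + (2 : K) • (B (e i) (D x) • ι Q (e' i)) :=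
    fun i => by
      rw [lie_ι_mul_ι_ι hsymm, hsymm (e' i), hskew, LinearMap.comp_apply]
      module
  rw [cliffordOfEnd, sum_lie, Finset.sum_congr rfl fun i _ => hterm i, Finset.sum_add_distrib,
    ← Finset.smul_sum, ← Finset.smul_sum, e.sum_smul_apply_of_dual_left hdual,
    e.sum_smul_apply_of_dual_right hdual, LinearMap.comp_apply]
  module

theorem lie_cliffordOfEnd (hsymm : ∀ x y, B x y = B y x)
    (hdual : ∀ i j, B (e i) (e' j) = if i = j then 1 else 0) {D D' : Module.End K V}
    (hD : ∀ x y, B (D x) y = -B x (D y)) :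
    ⁅cliffordOfEnd B e e' D, cliffordOfEnd B e e' D'⁆ = (4 : K) • cliffordOfEnd B e e' ⁅D, D'⁆ := by
  set T := cliffordOfEnd B e e' D
  have leibniz : ∀ Y Z : CliffordAlgebra Q, ⁅T, Y * Z⁆ = ⁅T, Y⁆ * Z + Y * ⁅T, Z⁆ := fun Y Z => by
    simp only [Ring.lie_def]
    noncomm_ring
  have exchange := e.sum_apply_map_dual_eq_neg hdual hD
    ((LinearMap.mul K (CliffordAlgebra Q)).compl₁₂ (ι Q ∘ₗ D') (ι Q))
  simp only [LinearMap.compl₁₂_apply, LinearMap.comp_apply, LinearMap.mul_apply'] at exchange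
  have hterm : ∀ i, ⁅T, ι Q (D' (e i)) * ι Q (e' i)⁆
      = (4 : K) • (ι Q (D (D' (e i))) * ι Q (e' i) + ι Q (D' (e i)) * ι Q (D (e' i))) := fun i => by
    rw [leibniz, lie_cliffordOfEnd_ι hsymm hdual hD, lie_cliffordOfEnd_ι hsymm hdual hD,
      smul_mul_assoc, mul_smul_comm, smul_add]
  rw [cliffordOfEnd, lie_sum, Finset.sum_congr rfl fun i _ => hterm i, ← Finset.smul_sum,
    Finset.sum_add_distrib, exchange, ← sub_eq_add_neg, ← Finset.sum_sub_distrib, cliffordOfEnd]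
  simp only [← sub_mul, ← map_sub, Ring.lie_def, LinearMap.sub_apply, Module.End.mul_apply]

end CliffordOfEnd

open CliffordAlgebra in
theorem statement2_general (g : Type*) [LieRing g] [LieAlgebra ℂ g]
    (κ : LinearMap.BilinForm ℂ g)
    (hsymm : ∀ a b : g, κ a b = κ b a)
    (hinv : ∀ a b c : g, κ ⁅a, b⁆ c = κ a ⁅b, c⁆)
    (m : ℕ) (e : Module.Basis (Fin m) ℂ g) (e' : Fin m → g)
    (hdual : ∀ i j, κ (e i) (e' j) = if i = j then (1 : ℂ) else 0)
    (τ' : g → CliffordAlgebra (LinearMap.BilinMap.toQuadraticMap κ))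
    (hτ' : ∀ a : g, τ' a = (4 : ℂ)⁻¹ •
      ∑ i : Fin m, ι (LinearMap.BilinMap.toQuadraticMap κ) ⁅a, e i⁆ *
        ι (LinearMap.BilinMap.toQuadraticMap κ) (e' i)) :
    ∀ a b : g, τ' ⁅a, b⁆ = τ' a * τ' b - τ' b * τ' a := by
  have hτ : ∀ a, τ' a = (4 : ℂ)⁻¹ • cliffordOfEnd κ e e' (LieAlgebra.ad ℂ g a) := hτ'
  have ad_skew : ∀ a x y, κ (LieAlgebra.ad ℂ g a x) y = -κ x (LieAlgebra.ad ℂ g a y) :=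
    fun a x y => by rw [LieAlgebra.ad_apply, LieAlgebra.ad_apply, ← hinv, ← lie_skew, map_neg,
      LinearMap.neg_apply]
  intro a b
  rw [hτ, hτ, hτ, smul_mul_smul_comm, smul_mul_smul_comm, ← smul_sub, ← Ring.lie_def,
    lie_cliffordOfEnd hsymm hdual (ad_skew a), LieHom.map_lie, smul_smul]
  norm_num

open CliffordAlgebra in
/-- The map `a ↦ τ'_a` is a Lie algebra homomorphism from `g` into
`Cl(g,κ)` with the commutator bracket: `τ'_{[a,b]} = τ'_a·τ'_b − τ'_b·τ'_a`. -/
theorem statement2 (g : Type*) [LieRing g] [LieAlgebra ℂ g] [FiniteDimensional ℂ g]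
    (κ : LinearMap.BilinForm ℂ g)
    (hsymm : ∀ a b : g, κ a b = κ b a)
    (hinv : ∀ a b c : g, κ ⁅a, b⁆ c = κ a ⁅b, c⁆)
    (hnd : κ.Nondegenerate)
    (m : ℕ) (e : Module.Basis (Fin m) ℂ g) (e' : Fin m → g)
    (hdual : ∀ i j, κ (e i) (e' j) = if i = j then (1 : ℂ) else 0)
    (τ' : g → CliffordAlgebra (LinearMap.BilinMap.toQuadraticMap κ))
    (hτ' : ∀ a : g, τ' a = (4 : ℂ)⁻¹ •
      ∑ i : Fin m, ι (LinearMap.BilinMap.toQuadraticMap κ) ⁅a, e i⁆ *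
        ι (LinearMap.BilinMap.toQuadraticMap κ) (e' i)) :
    ∀ a b : g, τ' ⁅a, b⁆ = τ' a * τ' b - τ' b * τ' a :=
  statement2_general g κ hsymm hinv m e e' hdual τ' hτ'
end

section
/- For every a ∈ g one has τ'_a = −(1/4)(Θ·ι(a) + ι(a)·Θ) in Cl(g,κ). -/
/-!
Contracting the first index of the structure constants against the dual basis gives
`Θ = (1/6) ∑_{j,k} ι[e_j,e_k] ι(e^j) ι(e^k)`. Anticommuting `ι(a)` through a product of three
vectors produces three contractions with `κ(a, -)`; after resumming over the dual basis each of
them equals `-2 ∑_j ι[a,e_j] ι(e^j)` (the first one because `ad a`, being κ-skew, has trace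
zero). Hence `Θ ι(a) + ι(a) Θ = -∑_j ι[a,e_j] ι(e^j) = -4 τ'_a`.
-/

namespace LinearMap.BilinForm

variable {R M N n : Type*} [CommRing R] [AddCommGroup M] [Module R M] [AddCommGroup N]
  [Module R N] [Fintype n] [DecidableEq n]
  {B : LinearMap.BilinForm R M} {b : Module.Basis n R M} {b' : n → M}

theorem sum_apply_dual_smul_basis (hdual : ∀ i j, B (b i) (b' j) = if i = j then 1 else 0)
    (x : M) : ∑ i, B x (b' i) • b i = x := by
  have hrepr : ∀ i, B x (b' i) = b.repr x i := fun i => by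
    conv_lhs => rw [← b.sum_repr x]
    simp only [map_sum, map_smul, LinearMap.sum_apply, LinearMap.smul_apply,
      hdual, smul_eq_mul, mul_ite, mul_one, mul_zero, Finset.sum_ite_eq', Finset.mem_univ, if_true]
  simp only [hrepr, b.sum_repr]

theorem sum_apply_basis_smul_dual (hB : B.SeparatingRight)
    (hdual : ∀ i j, B (b i) (b' j) = if i = j then 1 else 0) (x : M) :
    ∑ i, B (b i) x • b' i = x := by
  refine sub_eq_zero.mp (hB _ fun y => ?_)
  have hbasis : ∀ j, B (b j) (∑ i, B (b i) x • b' i - x) = 0 := fun j => by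
    simp [hdual]
  rw [← b.sum_repr y]
  simp only [map_sum, map_smul, LinearMap.sum_apply, LinearMap.smul_apply,
    hbasis, smul_zero, Finset.sum_const_zero]

theorem sum_apply_basis_dual_comm (hB : B.SeparatingRight)
    (hdual : ∀ i j, B (b i) (b' j) = if i = j then 1 else 0) (hsymm : ∀ x y, B x y = B y x)
    (f : M →ₗ[R] M →ₗ[R] N) : ∑ i, f (b i) (b' i) = ∑ i, f (b' i) (b i) := by
  have hexp := sum_apply_basis_smul_dual hB hdual
  have hleft : ∀ i, f (b i) (b' i) = ∑ k, B (b k) (b i) • f (b' k) (b' i) := fun i => by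
    conv_lhs => rw [← hexp (b i)]
    simp
  have hright : ∀ i, f (b' i) (b i) = ∑ k, B (b k) (b i) • f (b' i) (b' k) := fun i => by
    conv_lhs => rw [← hexp (b i)]
    simp
  simp only [hleft, hright]
  rw [Finset.sum_comm]
  simp only [hsymm (b _) (b _)]

end LinearMap.BilinForm

namespace CliffordAlgebra

variable {R M : Type*} [CommRing R] [AddCommGroup M] [Module R M] {Q : QuadraticForm R M}

theorem ι_anticomm_ι_mul_ι_mul_ι (w x y z : M) :
    ι Q w * (ι Q x * ι Q y * ι Q z) + ι Q x * ι Q y * ι Q z * ι Q w =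
      QuadraticMap.polar Q w x • (ι Q y * ι Q z) -
        QuadraticMap.polar Q w y • (ι Q x * ι Q z) +
        QuadraticMap.polar Q w z • (ι Q x * ι Q y) := by
  calc _ = (ι Q w * ι Q x + ι Q x * ι Q w) * (ι Q y * ι Q z)
        - ι Q x * (ι Q w * ι Q y + ι Q y * ι Q w) * ι Q z
        + ι Q x * ι Q y * (ι Q w * ι Q z + ι Q z * ι Q w) := by noncomm_ring
    _ = _ := by
      simp only [ι_mul_ι_add_swap, Algebra.algebraMap_eq_smul_one, smul_mul_assoc, mul_smul_comm,
        one_mul, mul_one]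

end CliffordAlgebra

open CliffordAlgebra LinearMap.BilinForm

section

variable {R L n : Type*} [CommRing R] [LieRing L] [LieAlgebra R L] [Fintype n] [DecidableEq n]
  {κ : LinearMap.BilinForm R L} {e : Module.Basis n R L} {e' : n → L}

local notation "γ" => ι (LinearMap.BilinMap.toQuadraticMap κ)

theorem sum_ι_dual_mul_ι_lie (hB : κ.SeparatingRight)
    (hdual : ∀ i j, κ (e i) (e' j) = if i = j then 1 else 0) (hsymm : ∀ x y, κ x y = κ y x)
    (hinv : ∀ x y z : L, κ ⁅x, y⁆ z = κ x ⁅y, z⁆) (a : L) :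
    ∑ j, γ (e' j) * γ ⁅a, e j⁆ = -∑ j, γ ⁅a, e j⁆ * γ (e' j) := by
  -- `ad a` is κ-skew, so its trace vanishes.
  have htrace : ∑ j, (κ (e' j) ⁅a, e j⁆ + κ ⁅a, e j⁆ (e' j)) = 0 := by
    have hcomm :=
      sum_apply_basis_dual_comm hB hdual hsymm (κ.compl₂ (LieAlgebra.ad R L a))
    simp only [LinearMap.compl₂_apply, LieAlgebra.ad_apply] at hcomm
    rw [Finset.sum_add_distrib, ← hcomm, ← Finset.sum_add_distrib]
    refine Finset.sum_eq_zero fun j _ => ?_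
    rw [← lie_skew a (e j), map_neg, LinearMap.neg_apply, hinv, add_neg_cancel]
  rw [eq_neg_iff_add_eq_zero, ← Finset.sum_add_distrib]
  simp only [ι_mul_ι_add_swap, LinearMap.BilinMap.polar_toQuadraticMap, ← map_sum, htrace,
    map_zero]

theorem sum_sum_apply_lie_smul_ι_mul_ι (hB : κ.SeparatingRight)
    (hdual : ∀ i j, κ (e i) (e' j) = if i = j then 1 else 0) (hsymm : ∀ x y, κ x y = κ y x)
    (hinv : ∀ x y z : L, κ ⁅x, y⁆ z = κ x ⁅y, z⁆) (a : L) :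
    ∑ j, ∑ k, κ a ⁅e j, e k⁆ • (γ (e' j) * γ (e' k)) = ∑ j, γ (e' j) * γ ⁅a, e j⁆ := by
  refine Finset.sum_congr rfl fun j _ => ?_
  have hcoeff : ∀ k, κ a ⁅e j, e k⁆ = κ (e k) ⁅a, e j⁆ := fun k => by
    rw [← hinv, hsymm]
  conv_rhs => rw [← sum_apply_basis_smul_dual hB hdual ⁅a, e j⁆]
  simp only [hcoeff, map_sum, map_smul, Finset.mul_sum, mul_smul_comm]

theorem sum_sum_apply_dual_smul_ι_lie_left_mul_ι
    (hdual : ∀ i j, κ (e i) (e' j) = if i = j then 1 else 0) (a : L) :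
    ∑ j, ∑ k, κ a (e' j) • (γ ⁅e j, e k⁆ * γ (e' k)) =
      ∑ k, γ ⁅a, e k⁆ * γ (e' k) := by
  rw [Finset.sum_comm]
  refine Finset.sum_congr rfl fun k _ => ?_
  conv_rhs => rw [← sum_apply_dual_smul_basis hdual a]
  simp only [sum_lie, smul_lie, map_sum, map_smul, Finset.sum_mul, smul_mul_assoc]

theorem sum_sum_apply_dual_smul_ι_lie_right_mul_ι
    (hdual : ∀ i j, κ (e i) (e' j) = if i = j then 1 else 0) (a : L) :
    ∑ j, ∑ k, κ a (e' k) • (γ ⁅e j, e k⁆ * γ (e' j)) =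
      -∑ j, γ ⁅a, e j⁆ * γ (e' j) := by
  rw [← Finset.sum_neg_distrib]
  refine Finset.sum_congr rfl fun j _ => ?_
  conv_rhs => rw [← lie_skew, ← sum_apply_dual_smul_basis hdual a]
  simp only [lie_sum, lie_smul, map_neg, map_sum, map_smul, neg_mul, neg_neg, Finset.sum_mul,
    smul_mul_assoc]

theorem sum_sum_sum_apply_lie_smul_ι_mul_ι_mul_ι (hB : κ.SeparatingRight)
    (hdual : ∀ i j, κ (e i) (e' j) = if i = j then 1 else 0) :
    ∑ i, ∑ j, ∑ k, κ (e i) ⁅e j, e k⁆ • (γ (e' i) * γ (e' j) * γ (e' k)) =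
      ∑ j, ∑ k, γ ⁅e j, e k⁆ * γ (e' j) * γ (e' k) := by
  rw [Finset.sum_comm]
  refine Finset.sum_congr rfl fun j _ => ?_
  rw [Finset.sum_comm]
  refine Finset.sum_congr rfl fun k _ => ?_
  conv_rhs => rw [← sum_apply_basis_smul_dual hB hdual ⁅e j, e k⁆]
  simp only [map_sum, map_smul, Finset.sum_mul, smul_mul_assoc]

theorem sum_ι_lie_mul_ι_mul_ι_anticomm_ι (hB : κ.SeparatingRight)
    (hdual : ∀ i j, κ (e i) (e' j) = if i = j then 1 else 0) (hsymm : ∀ x y, κ x y = κ y x)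
    (hinv : ∀ x y z : L, κ ⁅x, y⁆ z = κ x ⁅y, z⁆) (a : L) :
    (∑ j, ∑ k, γ ⁅e j, e k⁆ * γ (e' j) * γ (e' k)) * γ a +
        γ a * ∑ j, ∑ k, γ ⁅e j, e k⁆ * γ (e' j) * γ (e' k) =
      -((6 : R) • ∑ j, γ ⁅a, e j⁆ * γ (e' j)) := by
  have hpolar :
      ∀ x y, QuadraticMap.polar (LinearMap.BilinMap.toQuadraticMap κ) x y = 2 * κ x y :=
    fun x y => by rw [LinearMap.BilinMap.polar_toQuadraticMap, hsymm y x, two_mul]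
  calc _ = ∑ j, ∑ k, (γ a * (γ ⁅e j, e k⁆ * γ (e' j) * γ (e' k)) +
        γ ⁅e j, e k⁆ * γ (e' j) * γ (e' k) * γ a) := by
        simp only [Finset.sum_mul, Finset.mul_sum, Finset.sum_add_distrib, add_comm]
    _ = (2 : R) • ∑ j, ∑ k, κ a ⁅e j, e k⁆ • (γ (e' j) * γ (e' k))
        - (2 : R) • ∑ j, ∑ k, κ a (e' j) • (γ ⁅e j, e k⁆ * γ (e' k))
        + (2 : R) • ∑ j, ∑ k, κ a (e' k) • (γ ⁅e j, e k⁆ * γ (e' j)) := by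
        simp only [ι_anticomm_ι_mul_ι_mul_ι, hpolar, mul_smul, Finset.smul_sum,
          Finset.sum_add_distrib, Finset.sum_sub_distrib]
    _ = _ := by
      rw [sum_sum_apply_lie_smul_ι_mul_ι hB hdual hsymm hinv,
        sum_ι_dual_mul_ι_lie hB hdual hsymm hinv, sum_sum_apply_dual_smul_ι_lie_left_mul_ι hdual,
        sum_sum_apply_dual_smul_ι_lie_right_mul_ι hdual]
      module

end

open CliffordAlgebra in
theorem statement3_general (g : Type*) [LieRing g] [LieAlgebra ℂ g]
    (κ : LinearMap.BilinForm ℂ g)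
    (hsymm : ∀ a b : g, κ a b = κ b a)
    (hinv : ∀ a b c : g, κ ⁅a, b⁆ c = κ a ⁅b, c⁆)
    (hnd : κ.Nondegenerate)
    (m : ℕ) (e : Module.Basis (Fin m) ℂ g) (e' : Fin m → g)
    (hdual : ∀ i j, κ (e i) (e' j) = if i = j then (1 : ℂ) else 0)
    (τ' : g → CliffordAlgebra (LinearMap.BilinMap.toQuadraticMap κ))
    (hτ' : ∀ a : g, τ' a = (4 : ℂ)⁻¹ •
      ∑ i : Fin m, ι (LinearMap.BilinMap.toQuadraticMap κ) ⁅a, e i⁆ *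
        ι (LinearMap.BilinMap.toQuadraticMap κ) (e' i))
    (Θ : CliffordAlgebra (LinearMap.BilinMap.toQuadraticMap κ))
    (hΘ : Θ = (6 : ℂ)⁻¹ •
      ∑ i : Fin m, ∑ j : Fin m, ∑ k : Fin m, κ (e i) ⁅e j, e k⁆ •
        (ι (LinearMap.BilinMap.toQuadraticMap κ) (e' i) *
          ι (LinearMap.BilinMap.toQuadraticMap κ) (e' j) *
          ι (LinearMap.BilinMap.toQuadraticMap κ) (e' k))) :
    ∀ a : g, τ' a = -((4 : ℂ)⁻¹ •
      (Θ * ι (LinearMap.BilinMap.toQuadraticMap κ) a +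
        ι (LinearMap.BilinMap.toQuadraticMap κ) a * Θ)) := by
  intro a
  rw [hτ' a, hΘ, sum_sum_sum_apply_lie_smul_ι_mul_ι_mul_ι hnd.2 hdual, smul_mul_assoc,
    mul_smul_comm, ← smul_add, sum_ι_lie_mul_ι_mul_ι_anticomm_ι hnd.2 hdual hsymm hinv]
  module

open CliffordAlgebra in
/-- For every `a ∈ g` one has
`τ'_a = −(1/4)(Θ·ι(a) + ι(a)·Θ)` in `Cl(g,κ)`, where
`Θ = (1/6) Σ_{i,j,k} κ(e_i,[e_j,e_k]) ι(e^i)ι(e^j)ι(e^k)`. -/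
theorem statement3 (g : Type*) [LieRing g] [LieAlgebra ℂ g] [FiniteDimensional ℂ g]
    (κ : LinearMap.BilinForm ℂ g)
    (hsymm : ∀ a b : g, κ a b = κ b a)
    (hinv : ∀ a b c : g, κ ⁅a, b⁆ c = κ a ⁅b, c⁆)
    (hnd : κ.Nondegenerate)
    (m : ℕ) (e : Module.Basis (Fin m) ℂ g) (e' : Fin m → g)
    (hdual : ∀ i j, κ (e i) (e' j) = if i = j then (1 : ℂ) else 0)
    (τ' : g → CliffordAlgebra (LinearMap.BilinMap.toQuadraticMap κ))
    (hτ' : ∀ a : g, τ' a = (4 : ℂ)⁻¹ •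
      ∑ i : Fin m, ι (LinearMap.BilinMap.toQuadraticMap κ) ⁅a, e i⁆ *
        ι (LinearMap.BilinMap.toQuadraticMap κ) (e' i))
    (Θ : CliffordAlgebra (LinearMap.BilinMap.toQuadraticMap κ))
    (hΘ : Θ = (6 : ℂ)⁻¹ •
      ∑ i : Fin m, ∑ j : Fin m, ∑ k : Fin m, κ (e i) ⁅e j, e k⁆ •
        (ι (LinearMap.BilinMap.toQuadraticMap κ) (e' i) *
          ι (LinearMap.BilinMap.toQuadraticMap κ) (e' j) *
          ι (LinearMap.BilinMap.toQuadraticMap κ) (e' k))) :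
    ∀ a : g, τ' a = -((4 : ℂ)⁻¹ •
      (Θ * ι (LinearMap.BilinMap.toQuadraticMap κ) a +
        ι (LinearMap.BilinMap.toQuadraticMap κ) a * Θ)) :=
  statement3_general g κ hsymm hinv hnd m e e' hdual τ' hτ' Θ hΘ
end

section
/- Suppose h ∈ g and scalars λ_1,…,λ_n satisfy [h,b_j] = λ_j b_j and [h,b̄_j] = −λ_j b̄_j for all j. Then (1/4)(Θ·ι(h) + ι(h)·Θ) = −(1/4) Σ_{j=1}^n λ_j (ι(b_j)ι(b̄_j) − ι(b̄_j)ι(b_j)) in Cl(g,κ). -/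
/-!
Anticommuting `ι h` past a cubic monomial `ι x ι y ι z` leaves three quadratic monomials weighted
by `polar (·, h) = 2 κ(·, h)`. The structure constants `κ(e_i, [e_j, e_k])` are cyclically
symmetric and antisymmetric, so after relabelling the three resulting sums coincide, and
contracting the index `i` against the dual basis gives
`Θ ι(h) + ι(h) Θ = Σ_{j,k} κ(h, [e_j, e_k]) ι(e^j) ι(e^k)`.
By invariance `κ(h, [e_j, e_k]) = κ([h, e_j], e_k)`, which for the eigenvectors `b_j`, `b̄_j` of
`ad h` is nonzero only when `e_k` is the partner of `e_j`.
-/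

namespace CliffordAlgebra

variable {R M : Type*} [CommRing R] [AddCommGroup M] [Module R M] (Q : QuadraticForm R M)

theorem ι_mul_ι_mul_ι_mul_ι_add_ι_mul_ι_mul_ι_mul_ι (x y z w : M) :
    ι Q x * ι Q y * ι Q z * ι Q w + ι Q w * (ι Q x * ι Q y * ι Q z) =
      QuadraticMap.polar Q z w • (ι Q x * ι Q y) - QuadraticMap.polar Q y w • (ι Q x * ι Q z)
        + QuadraticMap.polar Q x w • (ι Q y * ι Q z) := by
  rw [Algebra.smul_def, Algebra.smul_def, Algebra.smul_def, Algebra.commutes,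
    ← Algebra.left_comm, ← ι_mul_ι_add_swap, ← ι_mul_ι_add_swap, ← ι_mul_ι_add_swap]
  noncomm_ring

end CliffordAlgebra

theorem Finset.sum_smul_rotate_sub_swap_add {ι R A : Type*} [Fintype ι] [Ring R]
    [AddCommGroup A] [Module R A] (c : ι → ι → ι → R)
    (hrot : ∀ i j k, c j k i = c i j k) (hswap : ∀ i j k, c j i k = -c i j k)
    (f : ι → ι → ι → A) :
    ∑ i, ∑ j, ∑ k, c i j k • (f k i j - f j i k + f i j k) =
      3 • ∑ i, ∑ j, ∑ k, c i j k • f i j k := by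
  have hrot_sum : ∑ i, ∑ j, ∑ k, c i j k • f k i j = ∑ i, ∑ j, ∑ k, c i j k • f i j k := by
    refine (Finset.sum_congr rfl fun i _ => Finset.sum_comm).trans ?_
    rw [Finset.sum_comm]
    exact Finset.sum_congr rfl fun a _ => Finset.sum_congr rfl fun b _ =>
      Finset.sum_congr rfl fun d _ => by rw [hrot]
  have hswap_sum : ∑ i, ∑ j, ∑ k, c i j k • f j i k = -∑ i, ∑ j, ∑ k, c i j k • f i j k := by
    rw [Finset.sum_comm]
    simp only [← Finset.sum_neg_distrib]
    exact Finset.sum_congr rfl fun a _ => Finset.sum_congr rfl fun b _ =>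
      Finset.sum_congr rfl fun d _ => by rw [hswap, neg_smul]
  simp only [smul_add, smul_sub, Finset.sum_add_distrib, Finset.sum_sub_distrib, hrot_sum,
    hswap_sum]
  abel

theorem Module.Basis.sum_apply_smul_of_dual {ι R M : Type*} [Fintype ι] [DecidableEq ι]
    [CommRing R] [AddCommGroup M] [Module R M] (κ : LinearMap.BilinForm R M)
    (e : Module.Basis ι R M) (e' : ι → M)
    (hdual : ∀ i j, κ (e i) (e' j) = if i = j then 1 else 0) (x : M) :
    ∑ i, κ x (e' i) • e i = x := by
  have hrepr : ∀ j, κ x (e' j) = e.repr x j := by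
    intro j
    conv_lhs => rw [← e.sum_repr x]
    simp only [map_sum, map_smul, LinearMap.sum_apply, LinearMap.smul_apply,
      hdual, smul_eq_mul, mul_ite, mul_one, mul_zero, Finset.sum_ite_eq', Finset.mem_univ, if_true]
  simp only [hrepr, e.sum_repr]

open CliffordAlgebra LinearMap.BilinMap

section CubicElement

variable {I R L : Type*} [Fintype I] [CommRing R] [LieRing L] [LieAlgebra R L]
  {κ : LinearMap.BilinForm R L}

variable (κ) in
noncomputable def cubicElement (e e' : I → L) : CliffordAlgebra (toQuadraticMap κ) :=
  ∑ i, ∑ j, ∑ k, κ (e i) ⁅e j, e k⁆ •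
    (ι (toQuadraticMap κ) (e' i) * ι (toQuadraticMap κ) (e' j) * ι (toQuadraticMap κ) (e' k))

theorem cubicElement_mul_ι_add_ι_mul_cubicElement [DecidableEq I]
    (hsymm : ∀ a b : L, κ a b = κ b a) (hinv : ∀ a b c : L, κ ⁅a, b⁆ c = κ a ⁅b, c⁆)
    (e : Module.Basis I R L) (e' : I → L)
    (hdual : ∀ i j, κ (e i) (e' j) = if i = j then 1 else 0) (h : L) :
    cubicElement κ e e' * ι (toQuadraticMap κ) h + ι (toQuadraticMap κ) h * cubicElement κ e e' =
      (6 : R) • ∑ j, ∑ k, κ h ⁅e j, e k⁆ •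
        (ι (toQuadraticMap κ) (e' j) * ι (toQuadraticMap κ) (e' k)) := by
  set Q := toQuadraticMap κ
  have hrot : ∀ i j k, κ (e j) ⁅e k, e i⁆ = κ (e i) ⁅e j, e k⁆ := fun i j k => by
    rw [← hinv, hsymm]
  have hswap : ∀ i j k, κ (e j) ⁅e i, e k⁆ = -κ (e i) ⁅e j, e k⁆ := fun i j k => by
    rw [← hinv, ← lie_skew, map_neg, LinearMap.neg_apply, hinv]
  have hcontract : ∀ v, ∑ i, κ (e i) v * QuadraticMap.polar Q (e' i) h = 2 * κ h v := by
    intro v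
    conv_rhs => rw [← e.sum_apply_smul_of_dual κ e' hdual h]
    simp only [Q, polar_toQuadraticMap, hsymm (e' _) h, map_sum, map_smul, Finset.mul_sum,
      LinearMap.sum_apply, LinearMap.smul_apply, smul_eq_mul]
    exact Finset.sum_congr rfl fun i _ => by ring
  simp only [cubicElement, Finset.sum_mul, Finset.mul_sum, smul_mul_assoc, mul_smul_comm,
    ← Finset.sum_add_distrib, ← smul_add, ι_mul_ι_mul_ι_mul_ι_add_ι_mul_ι_mul_ι_mul_ι]
  rw [Finset.sum_smul_rotate_sub_swap_add (fun i j k => κ (e i) ⁅e j, e k⁆) hrot hswap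
    (fun i j k => QuadraticMap.polar Q (e' i) h • (ι Q (e' j) * ι Q (e' k)))]
  have hsum : ∑ i, ∑ j, ∑ k, κ (e i) ⁅e j, e k⁆ •
        QuadraticMap.polar Q (e' i) h • (ι Q (e' j) * ι Q (e' k)) =
      (2 : R) • ∑ j, ∑ k, κ h ⁅e j, e k⁆ • (ι Q (e' j) * ι Q (e' k)) := by
    rw [Finset.sum_comm, Finset.smul_sum]
    refine Finset.sum_congr rfl fun j _ => ?_
    rw [Finset.sum_comm, Finset.smul_sum]
    refine Finset.sum_congr rfl fun k _ => ?_
    simp only [smul_smul, ← Finset.sum_smul, hcontract]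
  rw [hsum]
  module

theorem sum_apply_lie_smul_ι_mul_ι_of_lie_eq_smul [DecidableEq I]
    (hsymm : ∀ a b : L, κ a b = κ b a) (hinv : ∀ a b c : L, κ ⁅a, b⁆ c = κ a ⁅b, c⁆)
    (e : I → L) (e' : Module.Basis I R L)
    (hdual : ∀ i j, κ (e i) (e' j) = if i = j then 1 else 0) (h : L) (μ : I → R)
    (heig : ∀ j, ⁅h, e j⁆ = μ j • e j) :
    ∑ j, ∑ k, κ h ⁅e j, e k⁆ • (ι (toQuadraticMap κ) (e' j) * ι (toQuadraticMap κ) (e' k)) =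
      ∑ j, μ j • (ι (toQuadraticMap κ) (e' j) * ι (toQuadraticMap κ) (e j)) := by
  have hdual' : ∀ i j, κ (e' i) (e j) = if i = j then 1 else 0 := fun i j => by
    rw [hsymm, hdual]
    simp only [eq_comm]
  refine Finset.sum_congr rfl fun j _ => ?_
  conv_rhs => rw [← e'.sum_apply_smul_of_dual κ e hdual' (e j)]
  simp only [← hinv, heig, map_smul, LinearMap.smul_apply, smul_eq_mul, map_sum, Finset.mul_sum,
    mul_smul_comm, Finset.smul_sum, smul_smul]

end CubicElement

open CliffordAlgebra in
theorem statement5_general (g : Type*) [LieRing g] [LieAlgebra ℂ g]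
    (κ : LinearMap.BilinForm ℂ g)
    (hsymm : ∀ a b : g, κ a b = κ b a)
    (hinv : ∀ a b c : g, κ ⁅a, b⁆ c = κ a ⁅b, c⁆)
    (n : ℕ) (B : Module.Basis (Fin n ⊕ Fin n) ℂ g)
    (b bb : Fin n → g)
    (hb : ∀ i, b i = B (Sum.inl i)) (hbb : ∀ i, bb i = B (Sum.inr i))
    (hbiso : ∀ i j, κ (b i) (b j) = 0)
    (hbbiso : ∀ i j, κ (bb i) (bb j) = 0)
    (hpair : ∀ i j, κ (b i) (bb j) = if i = j then (1 : ℂ) else 0)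
    (Θ : CliffordAlgebra (LinearMap.BilinMap.toQuadraticMap κ))
    (hΘ : Θ = (6 : ℂ)⁻¹ •
      ∑ i : Fin n ⊕ Fin n, ∑ j : Fin n ⊕ Fin n, ∑ k : Fin n ⊕ Fin n,
        κ (B i) ⁅B j, B k⁆ •
          (ι (LinearMap.BilinMap.toQuadraticMap κ) (B i.swap) *
            ι (LinearMap.BilinMap.toQuadraticMap κ) (B j.swap) *
            ι (LinearMap.BilinMap.toQuadraticMap κ) (B k.swap)))
    (h : g) (lam : Fin n → ℂ)
    (hhb : ∀ j, ⁅h, b j⁆ = lam j • b j)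
    (hhbb : ∀ j, ⁅h, bb j⁆ = -(lam j) • bb j) :
    (4 : ℂ)⁻¹ • (Θ * ι (LinearMap.BilinMap.toQuadraticMap κ) h +
        ι (LinearMap.BilinMap.toQuadraticMap κ) h * Θ) =
    -((4 : ℂ)⁻¹ • ∑ j : Fin n, lam j •
        (ι (LinearMap.BilinMap.toQuadraticMap κ) (b j) *
            ι (LinearMap.BilinMap.toQuadraticMap κ) (bb j) -
          ι (LinearMap.BilinMap.toQuadraticMap κ) (bb j) *
            ι (LinearMap.BilinMap.toQuadraticMap κ) (b j))) := by
  set B' := B.reindex (Equiv.sumComm (Fin n) (Fin n))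
  have hB' : ∀ i, B' i = B i.swap := fun i => by simp [B']
  have hdual : ∀ i j, κ (B i) (B' j) = if i = j then 1 else 0 := by
    rintro (i | i) (j | j) <;>
      simp [hB', ← hb, ← hbb, hpair, hbiso, hbbiso, hsymm (bb i), eq_comm]
  have heig : ∀ j, ⁅h, B j⁆ = Sum.elim lam (-lam) j • B j := by
    rintro (j | j) <;> simp [← hb, ← hbb, hhb, hhbb]
  have hΘ' : Θ = (6 : ℂ)⁻¹ • cubicElement κ B B' := by
    simp only [hΘ, cubicElement, hB']
  rw [hΘ', smul_mul_assoc, mul_smul_comm, ← smul_add,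
    cubicElement_mul_ι_add_ι_mul_cubicElement hsymm hinv B B' hdual,
    sum_apply_lie_smul_ι_mul_ι_of_lie_eq_smul hsymm hinv B B' hdual h _ heig,
    Fintype.sum_sum_type]
  simp only [hB', Sum.swap_inl, Sum.swap_inr, Sum.elim_inl, Sum.elim_inr, ← hb, ← hbb,
    Pi.neg_apply, neg_smul, smul_sub, Finset.sum_neg_distrib, Finset.sum_sub_distrib]
  module

open CliffordAlgebra in
/-- `dim_ℂ g = 2n`, with basis `b_1,…,b_n,b̄_1,…,b̄_n` such that
`κ(b_i,b_j) = 0`, `κ(b̄_i,b̄_j) = 0`, `κ(b_i,b̄_j) = δ_{ij}` (so the `κ`-dual basis is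
`b̄_1,…,b̄_n,b_1,…,b_n`).  If `h ∈ g` satisfies `[h,b_j] = λ_j b_j` and
`[h,b̄_j] = −λ_j b̄_j`, then `(1/4)(Θ·ι(h) + ι(h)·Θ) =
−(1/4) Σ_j λ_j (ι(b_j)ι(b̄_j) − ι(b̄_j)ι(b_j))`. -/
theorem statement5 (g : Type*) [LieRing g] [LieAlgebra ℂ g] [FiniteDimensional ℂ g]
    (κ : LinearMap.BilinForm ℂ g)
    (hsymm : ∀ a b : g, κ a b = κ b a)
    (hinv : ∀ a b c : g, κ ⁅a, b⁆ c = κ a ⁅b, c⁆)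
    (hnd : κ.Nondegenerate)
    (n : ℕ) (B : Module.Basis (Fin n ⊕ Fin n) ℂ g)
    (b bb : Fin n → g)
    (hb : ∀ i, b i = B (Sum.inl i)) (hbb : ∀ i, bb i = B (Sum.inr i))
    (hbiso : ∀ i j, κ (b i) (b j) = 0)
    (hbbiso : ∀ i j, κ (bb i) (bb j) = 0)
    (hpair : ∀ i j, κ (b i) (bb j) = if i = j then (1 : ℂ) else 0)
    (Θ : CliffordAlgebra (LinearMap.BilinMap.toQuadraticMap κ))
    (hΘ : Θ = (6 : ℂ)⁻¹ •
      ∑ i : Fin n ⊕ Fin n, ∑ j : Fin n ⊕ Fin n, ∑ k : Fin n ⊕ Fin n,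
        κ (B i) ⁅B j, B k⁆ •
          (ι (LinearMap.BilinMap.toQuadraticMap κ) (B i.swap) *
            ι (LinearMap.BilinMap.toQuadraticMap κ) (B j.swap) *
            ι (LinearMap.BilinMap.toQuadraticMap κ) (B k.swap)))
    (h : g) (lam : Fin n → ℂ)
    (hhb : ∀ j, ⁅h, b j⁆ = lam j • b j)
    (hhbb : ∀ j, ⁅h, bb j⁆ = -(lam j) • bb j) :
    (4 : ℂ)⁻¹ • (Θ * ι (LinearMap.BilinMap.toQuadraticMap κ) h +
        ι (LinearMap.BilinMap.toQuadraticMap κ) h * Θ) =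
    -((4 : ℂ)⁻¹ • ∑ j : Fin n, lam j •
        (ι (LinearMap.BilinMap.toQuadraticMap κ) (b j) *
            ι (LinearMap.BilinMap.toQuadraticMap κ) (bb j) -
          ι (LinearMap.BilinMap.toQuadraticMap κ) (bb j) *
            ι (LinearMap.BilinMap.toQuadraticMap κ) (b j))) :=
  statement5_general g κ hsymm hinv n B b bb hb hbb hbiso hbbiso hpair Θ hΘ h lam hhb hhbb
end

section
/- With u := ι(b̄_1)···ι(b̄_n), ū := ι(b_1)···ι(b_n), v := u·ū and ρ := (1/2) Σ_{j=1}^n [b_j,b̄_j], one has (1/4)(Θ·v − v·Θ) = (1/2)(ι(ρ)·v − v·ι(ρ)) in Cl(g,κ). -/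
/-!
Since `l` and `l̄` are Lagrangian, `v = u·ū` satisfies `ι(b̄_p)·v = 0` and `v·ι(b_p) = 0`. Summing
out the last index with the dual-basis expansion gives `6Θ = Σ_{i,j} ι(e^i) ι(e^j) ι([e_i,e_j])`.
Pushing the annihilators `ι(b̄_p)` through to `v` with `ι(x)ι(y) + ι(y)ι(x) = 2κ(x,y)` kills
every term of `6Θ·v` except the two mixed ones. (The `l̄ l̄` term dies because `l̄` is a
subalgebra.) The mixed terms contribute `4ι(2ρ)·v` and `2ι(2ρ)·v`, so `Θ·v = ι(2ρ)·v`. For the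
mirror identity `v·Θ = v·ι(2ρ)`, apply the reversion anti-automorphism: it sends `Θ` to `-Θ`,
and it exchanges the roles of `l` and `l̄`.
-/

open CliffordAlgebra LinearMap.BilinMap

section Vacuum

variable {R M : Type*} [CommRing R] [AddCommGroup M] [Module R M] {Q : QuadraticForm R M}

theorem CliffordAlgebra.ι_mul_prod_map_ι_eq_zero {L : List M} (hQ : ∀ y ∈ L, Q y = 0)
    (hortho : ∀ y ∈ L, ∀ z ∈ L, Q.IsOrtho y z) {x : M} (hx : x ∈ L) :
    ι Q x * (L.map (ι Q)).prod = 0 := by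
  induction L with
  | nil => cases hx
  | cons y L ih =>
    rw [List.map_cons, List.prod_cons]
    rcases List.mem_cons.mp hx with rfl | hx
    · rw [← mul_assoc, ι_sq_scalar, hQ x List.mem_cons_self, map_zero, zero_mul]
    · rw [ι_mul_ι_mul_of_isOrtho _ (hortho x (.tail _ hx) y List.mem_cons_self),
        ih (fun z hz => hQ z (.tail _ hz)) (fun a ha c hc => hortho a (.tail _ ha) c (.tail _ hc))
          hx, mul_zero, neg_zero]

theorem CliffordAlgebra.prod_map_ι_mul_eq_zero {L : List M} (hQ : ∀ y ∈ L, Q y = 0)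
    (hortho : ∀ y ∈ L, ∀ z ∈ L, Q.IsOrtho y z) {x : M} (hx : x ∈ L) :
    (L.map (ι Q)).prod * ι Q x = 0 := by
  apply reverse_involutive.injective
  rw [reverse.map_mul, reverse_ι, reverse_prod_map_ι, ← List.map_reverse, map_zero]
  exact ι_mul_prod_map_ι_eq_zero (by simpa) (by simpa) (List.mem_reverse.mpr hx)

variable {w : CliffordAlgebra Q} {a : M}

theorem CliffordAlgebra.ι_mul_ι_mul_of_ι_mul_eq_zero (hw : ι Q a * w = 0) (y : M) :
    ι Q a * (ι Q y * w) = QuadraticMap.polar Q a y • w := by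
  rw [← mul_assoc, ι_mul_ι_comm, sub_mul, mul_assoc, hw, mul_zero, sub_zero, Algebra.smul_def]

theorem CliffordAlgebra.ι_mul_ι_mul_ι_mul_of_ι_mul_eq_zero (hw : ι Q a * w = 0) (y z : M) :
    ι Q a * (ι Q y * (ι Q z * w)) =
      QuadraticMap.polar Q a y • (ι Q z * w) - QuadraticMap.polar Q a z • (ι Q y * w) := by
  rw [← mul_assoc, ι_mul_ι_comm, sub_mul, mul_assoc, ι_mul_ι_mul_of_ι_mul_eq_zero hw,
    mul_smul_comm, Algebra.algebraMap_eq_smul_one, smul_mul_assoc, one_mul]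

theorem CliffordAlgebra.ι_mul_eq_zero_of_mem_span {I : Type*} {f : I → M}
    (hw : ∀ p, ι Q (f p) * w = 0) {y : M} (hy : y ∈ Submodule.span R (Set.range f)) :
    ι Q y * w = 0 := by
  have : Submodule.span R (Set.range f) ≤ LinearMap.ker (LinearMap.mulRight R w ∘ₗ ι Q) :=
    Submodule.span_le.mpr (by rintro _ ⟨p, rfl⟩; exact hw p)
  exact this hy

theorem polar_toQuadraticMap_eq_two_mul {κ : LinearMap.BilinForm R M}
    (hsymm : ∀ a b, κ a b = κ b a) (x y : M) :
    QuadraticMap.polar (toQuadraticMap κ) x y = 2 * κ x y := by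
  rw [polar_toQuadraticMap, hsymm y x, two_mul]

end Vacuum

section CubicTerm

variable {R g I J : Type*} [CommRing R] [LieRing g] [LieAlgebra R g] [Fintype I] [Fintype J]
  (κ : LinearMap.BilinForm R g)

/-- For `d` the `κ`-dual family of `e`, this is `6Θ`. -/
noncomputable def cubicTerm (e d : I → g) : CliffordAlgebra (toQuadraticMap κ) :=
  ∑ i, ∑ j, ∑ k, κ (e i) ⁅e j, e k⁆ •
    (ι (toQuadraticMap κ) (d i) * ι (toQuadraticMap κ) (d j) * ι (toQuadraticMap κ) (d k))

variable {κ}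

theorem cubicTerm_comp_equiv (e d : I → g) (σ : J ≃ I) :
    cubicTerm κ (e ∘ σ) (d ∘ σ) = cubicTerm κ e d :=
  Fintype.sum_equiv σ _ _ fun _ => Fintype.sum_equiv σ _ _ fun _ =>
    Fintype.sum_equiv σ _ _ fun _ => rfl

theorem reverse_cubicTerm (hsymm : ∀ a b, κ a b = κ b a)
    (hinv : ∀ a b c, κ ⁅a, b⁆ c = κ a ⁅b, c⁆) (e d : I → g) :
    reverse (cubicTerm κ e d) = -cubicTerm κ e d := by
  have hanti : ∀ a b c, κ c ⁅b, a⁆ = -κ a ⁅b, c⁆ := fun a b c => by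
    rw [← hinv, hsymm, ← lie_skew b c, map_neg, neg_neg]
  simp only [cubicTerm, map_sum, map_smul, reverse.map_mul, reverse_ι, ← mul_assoc,
    ← Finset.sum_neg_distrib, ← neg_smul, ← hanti]
  rw [Finset.sum_comm]
  exact (Finset.sum_congr rfl fun _ _ => Finset.sum_comm).trans Finset.sum_comm

theorem cubicTerm_eq_sum_lie (hinv : ∀ a b c, κ ⁅a, b⁆ c = κ a ⁅b, c⁆) {e d : I → g}
    (hd : ∀ y, ∑ k, κ y (e k) • d k = y) :
    cubicTerm κ e d = ∑ i, ∑ j, ι (toQuadraticMap κ) (d i) * ι (toQuadraticMap κ) (d j) *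
      ι (toQuadraticMap κ) ⁅e i, e j⁆ := by
  refine Finset.sum_congr rfl fun i _ => Finset.sum_congr rfl fun j _ => ?_
  conv_rhs => rw [← hd ⁅e i, e j⁆]
  simp only [map_sum, map_smul, Finset.mul_sum, mul_smul_comm, hinv]

end CubicTerm

section WittBasis

variable {R g α : Type*} [CommRing R] [LieRing g] [LieAlgebra R g] [DecidableEq α]
  {κ : LinearMap.BilinForm R g} {B : Module.Basis (α ⊕ α) R g}

theorem repr_eq_apply_swap (hdual : ∀ i j, κ (B i) (B j.swap) = if i = j then 1 else 0)
    (y : g) (k : α ⊕ α) : B.repr y k = κ y (B k.swap) := by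
  have : B.coord k = κ.flip (B k.swap) := B.ext fun i => by
    simp [hdual, Finsupp.single_apply]
  exact LinearMap.congr_fun this y

variable [Fintype α]

theorem sum_apply_smul_swap (hdual : ∀ i j, κ (B i) (B j.swap) = if i = j then 1 else 0)
    (y : g) : ∑ k, κ y (B k) • B k.swap = y := by
  conv_rhs => rw [← B.sum_repr y]
  simp only [repr_eq_apply_swap hdual]
  exact Fintype.sum_equiv (Equiv.sumComm α α) _ _ fun k => by simp

variable {w : CliffordAlgebra (toQuadraticMap κ)}

theorem ι_mul_eq_sum_smul (hdual : ∀ i j, κ (B i) (B j.swap) = if i = j then 1 else 0)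
    (hw : ∀ p, ι (toQuadraticMap κ) (B (.inr p)) * w = 0) (y : g) :
    ι (toQuadraticMap κ) y * w =
      ∑ p, κ y (B (.inr p)) • (ι (toQuadraticMap κ) (B (.inl p)) * w) := by
  conv_lhs => rw [← B.sum_repr y]
  rw [map_sum, Finset.sum_mul, Fintype.sum_sum_type]
  simp only [map_smul, smul_mul_assoc, hw, smul_zero, Finset.sum_const_zero, add_zero,
    repr_eq_apply_swap hdual, Sum.swap_inl]

theorem sum_ι_inl_mul_ι_inr_mul_ι_lie_mul (hsymm : ∀ a b, κ a b = κ b a)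
    (hinv : ∀ a b c, κ ⁅a, b⁆ c = κ a ⁅b, c⁆)
    (hdual : ∀ i j, κ (B i) (B j.swap) = if i = j then 1 else 0)
    (hw : ∀ p, ι (toQuadraticMap κ) (B (.inr p)) * w = 0) :
    ∑ p, ∑ q, ι (toQuadraticMap κ) (B (.inl p)) * (ι (toQuadraticMap κ) (B (.inr q)) *
        (ι (toQuadraticMap κ) ⁅B (.inr p), B (.inl q)⁆ * w)) =
      (2 : R) • (ι (toQuadraticMap κ) (∑ p, ⁅B (.inl p), B (.inr p)⁆) * w) := by
  have hterm : ∀ p q, ι (toQuadraticMap κ) (B (.inl p)) * (ι (toQuadraticMap κ) (B (.inr q)) *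
      (ι (toQuadraticMap κ) ⁅B (.inr p), B (.inl q)⁆ * w)) =
      (2 * κ ⁅B (.inl q), B (.inr q)⁆ (B (.inr p))) • (ι (toQuadraticMap κ) (B (.inl p)) * w) :=
    fun p q => by
      rw [ι_mul_ι_mul_of_ι_mul_eq_zero (hw q), mul_smul_comm, QuadraticMap.polar_comm,
        polar_toQuadraticMap_eq_two_mul hsymm, hinv, hsymm (B (.inr p))]
  simp only [hterm, ← Finset.sum_smul, ← Finset.mul_sum, ← LinearMap.sum_apply, ← map_sum]
  rw [ι_mul_eq_sum_smul hdual hw, Finset.smul_sum]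
  simp only [mul_smul]

theorem sum_ι_inr_mul_ι_inl_mul_ι_lie_mul (hsymm : ∀ a b, κ a b = κ b a)
    (hinv : ∀ a b c, κ ⁅a, b⁆ c = κ a ⁅b, c⁆)
    (hdual : ∀ i j, κ (B i) (B j.swap) = if i = j then 1 else 0)
    (hw : ∀ p, ι (toQuadraticMap κ) (B (.inr p)) * w = 0) :
    ∑ p, ∑ q, ι (toQuadraticMap κ) (B (.inr p)) * (ι (toQuadraticMap κ) (B (.inl q)) *
        (ι (toQuadraticMap κ) ⁅B (.inl p), B (.inr q)⁆ * w)) =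
      (4 : R) • (ι (toQuadraticMap κ) (∑ p, ⁅B (.inl p), B (.inr p)⁆) * w) := by
  have hpair : ∀ p q, κ (B (.inr p)) (B (.inl q)) = if p = q then 1 else 0 := fun p q => by
    simpa using hdual (.inr p) (.inr q)
  have hcoef : ∀ p q, κ (B (.inr p)) ⁅B (.inl p), B (.inr q)⁆ =
      -κ ⁅B (.inl p), B (.inr p)⁆ (B (.inr q)) := fun p q => by
    rw [← hinv, ← lie_skew, map_neg, LinearMap.neg_apply]
  simp only [ι_mul_ι_mul_ι_mul_of_ι_mul_eq_zero (hw _), polar_toQuadraticMap_eq_two_mul hsymm,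
    hpair, hcoef, Finset.sum_sub_distrib, mul_ite, mul_one, mul_zero, ite_smul, zero_smul,
    Finset.sum_ite_eq, Finset.mem_univ, if_true]
  rw [Finset.sum_comm]
  simp only [mul_neg, neg_smul, Finset.sum_neg_distrib, ← Finset.sum_smul,
    ← LinearMap.sum_apply, ← map_sum, ← Finset.sum_mul, mul_smul, ← Finset.smul_sum]
  rw [← ι_mul_eq_sum_smul hdual hw]
  module

theorem cubicTerm_mul_of_ι_inr_mul_eq_zero (hsymm : ∀ a b, κ a b = κ b a)
    (hinv : ∀ a b c, κ ⁅a, b⁆ c = κ a ⁅b, c⁆)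
    (hdual : ∀ i j, κ (B i) (B j.swap) = if i = j then 1 else 0)
    (hsub : ∀ p q, ⁅B (.inr p), B (.inr q)⁆ ∈ Submodule.span R (Set.range fun r => B (.inr r)))
    (hw : ∀ p, ι (toQuadraticMap κ) (B (.inr p)) * w = 0) :
    cubicTerm κ B (fun i => B i.swap) * w =
      (6 : R) • (ι (toQuadraticMap κ) (∑ p, ⁅B (.inl p), B (.inr p)⁆) * w) := by
  have hinl : ∀ p q, ι (toQuadraticMap κ) (B (.inr p)) * (ι (toQuadraticMap κ) (B (.inr q)) *
      (ι (toQuadraticMap κ) ⁅B (.inl p), B (.inl q)⁆ * w)) = 0 := fun p q => by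
    rw [ι_mul_ι_mul_of_ι_mul_eq_zero (hw q), mul_smul_comm, hw, smul_zero]
  have hinr : ∀ p q, ι (toQuadraticMap κ) ⁅B (.inr p), B (.inr q)⁆ * w = 0 := fun p q =>
    ι_mul_eq_zero_of_mem_span hw (hsub p q)
  rw [cubicTerm_eq_sum_lie hinv (sum_apply_smul_swap hdual)]
  simp only [Fintype.sum_sum_type, Finset.sum_add_distrib, add_mul, Finset.sum_mul, mul_assoc,
    Sum.swap_inl, Sum.swap_inr, hinl, hinr, mul_zero, Finset.sum_const_zero, zero_add, add_zero,
    sum_ι_inl_mul_ι_inr_mul_ι_lie_mul hsymm hinv hdual hw,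
    sum_ι_inr_mul_ι_inl_mul_ι_lie_mul hsymm hinv hdual hw]
  rw [← add_smul]
  norm_num

theorem mul_cubicTerm_of_mul_ι_inl_eq_zero (hsymm : ∀ a b, κ a b = κ b a)
    (hinv : ∀ a b c, κ ⁅a, b⁆ c = κ a ⁅b, c⁆)
    (hdual : ∀ i j, κ (B i) (B j.swap) = if i = j then 1 else 0)
    (hsub : ∀ p q, ⁅B (.inl p), B (.inl q)⁆ ∈ Submodule.span R (Set.range fun r => B (.inl r)))
    (hw : ∀ p, w * ι (toQuadraticMap κ) (B (.inl p)) = 0) :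
    w * cubicTerm κ B (fun i => B i.swap) =
      (6 : R) • (w * ι (toQuadraticMap κ) (∑ p, ⁅B (.inl p), B (.inr p)⁆)) := by
  set B' := B.reindex (Equiv.sumComm α α)
  have hB' : ∀ i, B' i = B i.swap := fun i => by simp [B']
  have hdual' : ∀ i j, κ (B' i) (B' j.swap) = if i = j then 1 else 0 := fun i j => by
    simpa [hB', Sum.swap_leftInverse.injective.eq_iff] using hdual i.swap j.swap
  have hsub' : ∀ p q, ⁅B' (.inr p), B' (.inr q)⁆ ∈
      Submodule.span R (Set.range fun r => B' (.inr r)) := by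
    simpa [hB'] using hsub
  have hw' : ∀ p, ι (toQuadraticMap κ) (B' (.inr p)) * reverse w = 0 := fun p => by
    rw [hB', Sum.swap_inr, ← reverse_ι, ← reverse.map_mul, hw, map_zero]
  have hcubic : cubicTerm κ B' (fun i => B' i.swap) = cubicTerm κ B (fun i => B i.swap) := by
    rw [← cubicTerm_comp_equiv _ _ (Equiv.sumComm α α)]
    congr 1 <;> ext i <;> simp [hB']
  have hX : ∑ p, ⁅B' (.inl p), B' (.inr p)⁆ = -∑ p, ⁅B (.inl p), B (.inr p)⁆ := by
    simp [hB', ← Finset.sum_neg_distrib]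
  apply reverse_involutive.injective
  rw [reverse.map_mul, map_smul, reverse.map_mul, reverse_ι, reverse_cubicTerm hsymm hinv, neg_mul,
    ← hcubic, cubicTerm_mul_of_ι_inr_mul_eq_zero hsymm hinv hdual' hsub' hw', hX, map_neg,
    neg_mul, smul_neg, neg_neg]

end WittBasis

open CliffordAlgebra in
theorem statement7_general (g : Type*) [LieRing g] [LieAlgebra ℂ g]
    (κ : LinearMap.BilinForm ℂ g)
    (hsymm : ∀ a b : g, κ a b = κ b a)
    (hinv : ∀ a b c : g, κ ⁅a, b⁆ c = κ a ⁅b, c⁆)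
    (n : ℕ) (B : Module.Basis (Fin n ⊕ Fin n) ℂ g)
    (b bb : Fin n → g)
    (hb : ∀ i, b i = B (Sum.inl i)) (hbb : ∀ i, bb i = B (Sum.inr i))
    (hbiso : ∀ i j, κ (b i) (b j) = 0)
    (hbbiso : ∀ i j, κ (bb i) (bb j) = 0)
    (hpair : ∀ i j, κ (b i) (bb j) = if i = j then (1 : ℂ) else 0)
    (hsubalg : ∀ i j, ⁅b i, b j⁆ ∈ Submodule.span ℂ (Set.range b))
    (hsubalgbar : ∀ i j, ⁅bb i, bb j⁆ ∈ Submodule.span ℂ (Set.range bb))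
    (Θ : CliffordAlgebra (LinearMap.BilinMap.toQuadraticMap κ))
    (hΘ : Θ = (6 : ℂ)⁻¹ •
      ∑ i : Fin n ⊕ Fin n, ∑ j : Fin n ⊕ Fin n, ∑ k : Fin n ⊕ Fin n,
        κ (B i) ⁅B j, B k⁆ •
          (ι (LinearMap.BilinMap.toQuadraticMap κ) (B i.swap) *
            ι (LinearMap.BilinMap.toQuadraticMap κ) (B j.swap) *
            ι (LinearMap.BilinMap.toQuadraticMap κ) (B k.swap)))
    (u : CliffordAlgebra (LinearMap.BilinMap.toQuadraticMap κ))
    (hu : u = ((List.finRange n).map fun j =>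
      ι (LinearMap.BilinMap.toQuadraticMap κ) (bb j)).prod)
    (ubar : CliffordAlgebra (LinearMap.BilinMap.toQuadraticMap κ))
    (hubar : ubar = ((List.finRange n).map fun j =>
      ι (LinearMap.BilinMap.toQuadraticMap κ) (b j)).prod)
    (v : CliffordAlgebra (LinearMap.BilinMap.toQuadraticMap κ))
    (hv : v = u * ubar)
    (ρ : g) (hρ : ρ = (2 : ℂ)⁻¹ • ∑ j : Fin n, ⁅b j, bb j⁆) :
    (4 : ℂ)⁻¹ • (Θ * v - v * Θ) =
      (2 : ℂ)⁻¹ • (ι (LinearMap.BilinMap.toQuadraticMap κ) ρ * v -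
        v * ι (LinearMap.BilinMap.toQuadraticMap κ) ρ) := by
  obtain rfl : b = fun i => B (.inl i) := funext hb
  obtain rfl : bb = fun i => B (.inr i) := funext hbb
  have hdual : ∀ i j, κ (B i) (B j.swap) = if i = j then 1 else 0 := by
    rintro (p | p) (q | q) <;> simp [hbiso, hbbiso, hpair, hsymm (B (.inr p)), eq_comm]
  have hu' : u = (((List.finRange n).map fun i => B (.inr i)).map (ι _)).prod := by
    rw [hu, List.map_map]; rfl
  have hubar' : ubar = (((List.finRange n).map fun i => B (.inl i)).map (ι _)).prod := by
    rw [hubar, List.map_map]; rfl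
  have hleft : ∀ p, ι (toQuadraticMap κ) (B (.inr p)) * v = 0 := fun p => by
    rw [hv, hu', ← mul_assoc, ι_mul_prod_map_ι_eq_zero (by simp [hbbiso])
      (by simp [← QuadraticMap.isOrtho_polarBilin, polar_toQuadraticMap, hbbiso]) (by simp),
      zero_mul]
  have hright : ∀ p, v * ι (toQuadraticMap κ) (B (.inl p)) = 0 := fun p => by
    rw [hv, hubar', mul_assoc, prod_map_ι_mul_eq_zero (by simp [hbiso])
      (by simp [← QuadraticMap.isOrtho_polarBilin, polar_toQuadraticMap, hbiso]) (by simp),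
      mul_zero]
  have hΘ' : Θ = (6 : ℂ)⁻¹ • cubicTerm κ B (fun i => B i.swap) := hΘ
  have hρ' : ∑ p, ⁅B (.inl p), B (.inr p)⁆ = (2 : ℂ) • ρ := by
    rw [hρ, smul_inv_smul₀ two_ne_zero]
  rw [hΘ', smul_mul_assoc, mul_smul_comm,
    cubicTerm_mul_of_ι_inr_mul_eq_zero hsymm hinv hdual hsubalgbar hleft,
    mul_cubicTerm_of_mul_ι_inl_eq_zero hsymm hinv hdual hsubalg hright, hρ', map_smul,
    smul_mul_assoc, mul_smul_comm]
  module

open CliffordAlgebra in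
/-- With `u := ι(b̄_1)···ι(b̄_n)`, `ū := ι(b_1)···ι(b_n)`, `v := u·ū`
and `ρ := (1/2) Σ_j [b_j,b̄_j]`, one has
`(1/4)(Θ·v − v·Θ) = (1/2)(ι(ρ)·v − v·ι(ρ))` in `Cl(g,κ)`. -/
theorem statement7 (g : Type*) [LieRing g] [LieAlgebra ℂ g] [FiniteDimensional ℂ g]
    (κ : LinearMap.BilinForm ℂ g)
    (hsymm : ∀ a b : g, κ a b = κ b a)
    (hinv : ∀ a b c : g, κ ⁅a, b⁆ c = κ a ⁅b, c⁆)
    (hnd : κ.Nondegenerate)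
    (n : ℕ) (B : Module.Basis (Fin n ⊕ Fin n) ℂ g)
    (b bb : Fin n → g)
    (hb : ∀ i, b i = B (Sum.inl i)) (hbb : ∀ i, bb i = B (Sum.inr i))
    (hbiso : ∀ i j, κ (b i) (b j) = 0)
    (hbbiso : ∀ i j, κ (bb i) (bb j) = 0)
    (hpair : ∀ i j, κ (b i) (bb j) = if i = j then (1 : ℂ) else 0)
    (hsubalg : ∀ i j, ⁅b i, b j⁆ ∈ Submodule.span ℂ (Set.range b))
    (hsubalgbar : ∀ i j, ⁅bb i, bb j⁆ ∈ Submodule.span ℂ (Set.range bb))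
    (Θ : CliffordAlgebra (LinearMap.BilinMap.toQuadraticMap κ))
    (hΘ : Θ = (6 : ℂ)⁻¹ •
      ∑ i : Fin n ⊕ Fin n, ∑ j : Fin n ⊕ Fin n, ∑ k : Fin n ⊕ Fin n,
        κ (B i) ⁅B j, B k⁆ •
          (ι (LinearMap.BilinMap.toQuadraticMap κ) (B i.swap) *
            ι (LinearMap.BilinMap.toQuadraticMap κ) (B j.swap) *
            ι (LinearMap.BilinMap.toQuadraticMap κ) (B k.swap)))
    (u : CliffordAlgebra (LinearMap.BilinMap.toQuadraticMap κ))
    (hu : u = ((List.finRange n).map fun j =>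
      ι (LinearMap.BilinMap.toQuadraticMap κ) (bb j)).prod)
    (ubar : CliffordAlgebra (LinearMap.BilinMap.toQuadraticMap κ))
    (hubar : ubar = ((List.finRange n).map fun j =>
      ι (LinearMap.BilinMap.toQuadraticMap κ) (b j)).prod)
    (v : CliffordAlgebra (LinearMap.BilinMap.toQuadraticMap κ))
    (hv : v = u * ubar)
    (ρ : g) (hρ : ρ = (2 : ℂ)⁻¹ • ∑ j : Fin n, ⁅b j, bb j⁆) :
    (4 : ℂ)⁻¹ • (Θ * v - v * Θ) =
      (2 : ℂ)⁻¹ • (ι (LinearMap.BilinMap.toQuadraticMap κ) ρ * v -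
        v * ι (LinearMap.BilinMap.toQuadraticMap κ) ρ) :=
  statement7_general g κ hsymm hinv n B b bb hb hbb hbiso hbbiso hpair hsubalg hsubalgbar Θ hΘ u hu
    ubar hubar v hv ρ hρ
end

section
/- Let W ⊆ V be an isotropic subspace (κ(w,w') = 0 for all w,w' ∈ W) with basis c_1,…,c_m, and set s := ι(c_1)···ι(c_m) ∈ Cl(V,κ). Then s ≠ 0, and for every x ∈ V: ι(x)·s = 0 if and only if x ∈ W, and s·ι(x) = 0 if and only if x ∈ W. -/
/-!
Contracting with a linear functional `d` is a graded derivation of the Clifford algebra: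
`d⌋(ι v * b) = d v • b - ι v * (d⌋b)`. If `d` kills `c_1, …, c_m` it kills `s`, so
`d⌋(ι x * s) = d x • s`. Choosing `d` dual to one `c_i` peels off the factors of `s` one at a
time, hence `s ≠ 0`; choosing `d = κ y` with `y ⊥ W` shows that `ι x * s = 0` forces
`x ∈ W^⊥⊥ = W`. Conversely, isotropic vectors of `W` anticommute and square to zero, so each
`ι (c_i)` can be moved next to its own copy inside `ι (c_i) * s`. The statement for `s * ι x`
follows by applying the reversal anti-automorphism, which reverses the order of the factors.
-/

namespace CliffordAlgebra

section CommRing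

variable {R M I : Type*} [CommRing R] [AddCommGroup M] [Module R M] {Q : QuadraticForm R M}
  {c : I → M}

theorem contractLeft_prod_map_ι_eq_zero (d : Module.Dual R M) :
    ∀ {l : List I}, (∀ i ∈ l, d (c i) = 0) →
      contractLeft d (l.map fun i => ι Q (c i)).prod = 0
  | [], _ => by simp
  | i :: l, h => by
    rw [List.map_cons, List.prod_cons, contractLeft_ι_mul, h i List.mem_cons_self,
      contractLeft_prod_map_ι_eq_zero d fun j hj => h j (List.mem_cons_of_mem i hj),
      zero_smul, mul_zero, sub_zero]

theorem contractLeft_ι_mul_prod_map_ι (d : Module.Dual R M) (v : M) {l : List I}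
    (h : ∀ i ∈ l, d (c i) = 0) :
    contractLeft d (ι Q v * (l.map fun i => ι Q (c i)).prod) =
      d v • (l.map fun i => ι Q (c i)).prod := by
  rw [contractLeft_ι_mul, contractLeft_prod_map_ι_eq_zero d h, mul_zero, sub_zero]

theorem ι_mul_prod_map_ι_eq_zero_s9 {i : I} (hi : Q (c i) = 0) :
    ∀ {l : List I}, i ∈ l → (∀ j ∈ l, Q.IsOrtho (c i) (c j)) →
      ι Q (c i) * (l.map fun j => ι Q (c j)).prod = 0
  | [], hil, _ => absurd hil List.not_mem_nil
  | j :: l, hil, horth => by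
    rw [List.map_cons, List.prod_cons]
    rcases List.mem_cons.1 hil with rfl | hil
    · rw [← mul_assoc, ι_sq_scalar, hi, map_zero, zero_mul]
    · rw [ι_mul_ι_mul_of_isOrtho _ (horth j List.mem_cons_self),
        ι_mul_prod_map_ι_eq_zero_s9 hi hil fun k hk => horth k (List.mem_cons_of_mem j hk),
        mul_zero, neg_zero]

theorem reverse_prod_map_ι_comp (l : List I) :
    reverse (l.map fun i => ι Q (c i)).prod = (l.reverse.map fun i => ι Q (c i)).prod := by
  simpa [List.map_map, Function.comp_def] using reverse_prod_map_ι (Q := Q) (l.map c)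

end CommRing

section Field

variable {K V I : Type*} [Field K] [AddCommGroup V] [Module K V] {Q : QuadraticForm K V}
  {c : I → V}

theorem ι_mul_prod_map_ι_ne_zero {v : V} {l : List I}
    (hv : v ∉ Submodule.span K (c '' {i | i ∈ l}))
    (hl : (l.map fun i => ι Q (c i)).prod ≠ 0) :
    ι Q v * (l.map fun i => ι Q (c i)).prod ≠ 0 := by
  obtain ⟨d, hdv, hd⟩ := Submodule.exists_dual_map_eq_bot_of_notMem hv inferInstance
  have hdc : ∀ i ∈ l, d (c i) = 0 := fun i hi =>
    LinearMap.le_ker_iff_map.2 hd (Submodule.subset_span ⟨i, hi, rfl⟩)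
  intro h
  have := contractLeft_ι_mul_prod_map_ι (Q := Q) d v hdc
  rw [h, map_zero, eq_comm, smul_eq_zero] at this
  exact this.elim hdv hl

theorem prod_map_ι_ne_zero [Nontrivial (CliffordAlgebra Q)] (hc : LinearIndependent K c) :
    ∀ {l : List I}, l.Nodup → (l.map fun i => ι Q (c i)).prod ≠ 0
  | [], _ => by simp
  | i :: l, hl => by
    rw [List.map_cons, List.prod_cons]
    exact ι_mul_prod_map_ι_ne_zero (hc.notMem_span_image (List.nodup_cons.1 hl).1)
      (prod_map_ι_ne_zero hc (List.nodup_cons.1 hl).2)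

theorem apply_eq_zero_of_ι_mul_prod_map_ι_eq_zero {d : Module.Dual K V} {x : V} {l : List I}
    (hd : ∀ i ∈ l, d (c i) = 0) (hl : (l.map fun i => ι Q (c i)).prod ≠ 0)
    (h : ι Q x * (l.map fun i => ι Q (c i)).prod = 0) : d x = 0 := by
  have := contractLeft_ι_mul_prod_map_ι (Q := Q) d x hd
  rw [h, map_zero, eq_comm, smul_eq_zero] at this
  exact this.resolve_right hl

variable [FiniteDimensional K V] {κ : LinearMap.BilinForm K V}

theorem ι_mul_prod_map_ι_eq_zero_iff (hκ : κ.IsRefl) (hnd : κ.Nondegenerate)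
    (hiso : ∀ i j, κ (c i) (c j) = 0) {l : List I} (hl : ∀ i, i ∈ l)
    (hne : (l.map fun i => ι (LinearMap.BilinMap.toQuadraticMap κ) (c i)).prod ≠ 0) (x : V) :
    ι (LinearMap.BilinMap.toQuadraticMap κ) x *
        (l.map fun i => ι (LinearMap.BilinMap.toQuadraticMap κ) (c i)).prod = 0 ↔
      x ∈ Submodule.span K (Set.range c) := by
  constructor
  · intro h
    rw [← LinearMap.BilinForm.orthogonal_orthogonal hnd hκ (Submodule.span K (Set.range c))]
    intro y hy
    exact apply_eq_zero_of_ι_mul_prod_map_ι_eq_zero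
      (fun i _ => hκ _ _ (hy _ (Submodule.subset_span ⟨i, rfl⟩))) hne h
  · intro hx
    induction hx using Submodule.span_induction with
    | mem _ hv =>
      obtain ⟨i, rfl⟩ := hv
      refine ι_mul_prod_map_ι_eq_zero_s9 (hiso i i) (hl i) fun j _ => ?_
      rw [QuadraticMap.isOrtho_def]
      simp only [LinearMap.BilinMap.toQuadraticMap_apply, map_add, LinearMap.add_apply, hiso,
        add_zero]
    | zero => rw [map_zero, zero_mul]
    | add _ _ _ _ hx hy => rw [map_add, add_mul, hx, hy, add_zero]
    | smul _ _ _ hx => rw [map_smul, smul_mul_assoc, hx, smul_zero]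

end Field

end CliffordAlgebra

open CliffordAlgebra in
/-- Let `W ⊆ V` be an isotropic subspace with basis `c_1,…,c_m`, and set
`s := ι(c_1)···ι(c_m) ∈ Cl(V,κ)`.  Then `s ≠ 0`, and for every `x ∈ V`:
`ι(x)·s = 0 ↔ x ∈ W` and `s·ι(x) = 0 ↔ x ∈ W`. -/
theorem statement9 (V : Type*) [AddCommGroup V] [Module ℂ V] [FiniteDimensional ℂ V]
    (κ : LinearMap.BilinForm ℂ V)
    (hsymm : ∀ x y : V, κ x y = κ y x)
    (hnd : κ.Nondegenerate)
    (W : Submodule ℂ V)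
    (hiso : ∀ w ∈ W, ∀ w' ∈ W, κ w w' = 0)
    (m : ℕ) (c : Fin m → V)
    (hmem : ∀ i, c i ∈ W)
    (hli : LinearIndependent ℂ c)
    (hspan : Submodule.span ℂ (Set.range c) = W)
    (s : CliffordAlgebra (LinearMap.BilinMap.toQuadraticMap κ))
    (hs : s = ((List.finRange m).map fun i =>
      ι (LinearMap.BilinMap.toQuadraticMap κ) (c i)).prod) :
    s ≠ 0 ∧ ∀ x : V,
      (ι (LinearMap.BilinMap.toQuadraticMap κ) x * s = 0 ↔ x ∈ W) ∧
      (s * ι (LinearMap.BilinMap.toQuadraticMap κ) x = 0 ↔ x ∈ W) := by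
  have hκ : κ.IsRefl := fun x y h => (hsymm y x).trans h
  have hc : ∀ i j, κ (c i) (c j) = 0 := fun i j => hiso _ (hmem i) _ (hmem j)
  have hs0 : s ≠ 0 := hs ▸ prod_map_ι_ne_zero (Q := LinearMap.BilinMap.toQuadraticMap κ) hli
    (List.nodup_finRange m)
  have hrev : reverse s = ((List.finRange m).reverse.map fun i =>
      ι (LinearMap.BilinMap.toQuadraticMap κ) (c i)).prod := by
    rw [hs, reverse_prod_map_ι_comp]
  have hrev0 : reverse s ≠ 0 := (map_ne_zero_iff _ reverse_involutive.injective).2 hs0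
  refine ⟨hs0, fun x => ⟨?_, ?_⟩⟩
  · rw [hs, ← hspan]
    exact ι_mul_prod_map_ι_eq_zero_iff hκ hnd hc List.mem_finRange (hs ▸ hs0) x
  · rw [← map_eq_zero_iff _ reverse_involutive.injective, reverse.map_mul, reverse_ι, hrev,
      ← hspan]
    exact ι_mul_prod_map_ι_eq_zero_iff hκ hnd hc
      (fun i => List.mem_reverse.2 (List.mem_finRange i)) (hrev ▸ hrev0) x
end

section
/- One has τ·u = −(n i/2)·u and u·τ' = (n i/2)·u in Cl(V,κ); consequently τ·u − u·τ' = −i n·u and τ·u + u·τ' = 0. -/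
/-!
Since `κ` vanishes on the span of the `b̄_j`, the generators `ι(b̄_j)` square to zero and
anticommute, so `u` is annihilated by each `ι(b̄_j)` on both sides. Hence every term
`ι(b_j) ι(b̄_j)` of `τ` kills `u` from the left, every term `ι(b̄_j) ι(b_j)` of `τ'` kills it from
the right, and only the scalar parts of `τ` and `τ'` survive.
-/

section Anticommuting

variable {A : Type*} [Ring A]

theorem List.mul_prod_eq_neg_one_pow_mul {x : A} {L : List A}
    (hanti : ∀ y ∈ L, x * y = -(y * x)) :
    x * L.prod = (-1) ^ L.length * (L.prod * x) := by
  induction L with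
  | nil => simp
  | cons a L ih =>
    rw [List.forall_mem_cons] at hanti
    rw [List.prod_cons, ← mul_assoc, hanti.1, neg_mul, mul_assoc, ih hanti.2,
      ← ((Commute.neg_one_left a).pow_left _).left_comm]
    simp only [List.length_cons, pow_succ, mul_neg_one, neg_mul, mul_assoc]

theorem List.mul_prod_eq_zero_of_mem {x : A} {L : List A} (hx : x * x = 0)
    (hanti : ∀ y ∈ L, x * y = -(y * x)) (hmem : x ∈ L) :
    x * L.prod = 0 := by
  obtain ⟨s, t, rfl⟩ := List.append_of_mem hmem
  have hs : x * s.prod = (-1) ^ s.length * (s.prod * x) :=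
    List.mul_prod_eq_neg_one_pow_mul fun y hy => hanti y (by simp [hy])
  rw [List.prod_append, List.prod_cons, ← mul_assoc, hs, mul_assoc, mul_assoc, ← mul_assoc x,
    hx, zero_mul, mul_zero, mul_zero]

theorem List.prod_mul_eq_zero_of_mem {x : A} {L : List A} (hx : x * x = 0)
    (hanti : ∀ y ∈ L, x * y = -(y * x)) (hmem : x ∈ L) :
    L.prod * x = 0 := by
  obtain ⟨s, t, rfl⟩ := List.append_of_mem hmem
  have ht : x * t.prod = (-1) ^ t.length * (t.prod * x) :=
    List.mul_prod_eq_neg_one_pow_mul fun y hy => hanti y (by simp [hy])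
  have ht' : t.prod * x = (-1) ^ t.length * (x * t.prod) := by
    rw [ht, ← mul_assoc, ← pow_add, ← two_mul, pow_mul, neg_one_sq, one_pow, one_mul]
  rw [List.prod_append, List.prod_cons, mul_assoc, mul_assoc, ht',
    ((Commute.neg_one_left x).pow_left _).symm.left_comm, ← mul_assoc x, hx, zero_mul, mul_zero,
    mul_zero]

end Anticommuting

namespace CliffordAlgebra

variable {R M : Type*} [CommRing R] [AddCommGroup M] [Module R M] {Q : QuadraticForm R M}
  {ι' : Type*} {v : ι' → M}

theorem ι_mul_prod_map_ι_eq_zero_of_mem (hQ : ∀ i, Q (v i) = 0)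
    (horth : ∀ i j, Q.IsOrtho (v i) (v j)) {L : List ι'} {j : ι'} (hj : j ∈ L) :
    ι Q (v j) * (L.map fun i => ι Q (v i)).prod = 0 :=
  List.mul_prod_eq_zero_of_mem (by rw [ι_sq_scalar, hQ, map_zero])
    (by simpa using fun i _ => ι_mul_ι_comm_of_isOrtho (horth j i)) (List.mem_map_of_mem hj)

theorem prod_map_ι_mul_ι_eq_zero_of_mem (hQ : ∀ i, Q (v i) = 0)
    (horth : ∀ i j, Q.IsOrtho (v i) (v j)) {L : List ι'} {j : ι'} (hj : j ∈ L) :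
    (L.map fun i => ι Q (v i)).prod * ι Q (v j) = 0 :=
  List.prod_mul_eq_zero_of_mem (by rw [ι_sq_scalar, hQ, map_zero])
    (by simpa using fun i _ => ι_mul_ι_comm_of_isOrtho (horth j i)) (List.mem_map_of_mem hj)

end CliffordAlgebra

open CliffordAlgebra in
theorem statement10_general (V : Type*) [AddCommGroup V] [Module ℂ V]
    (κ : LinearMap.BilinForm ℂ V)
    (n : ℕ)
    (b bb : Fin n → V)
    (hbbiso : ∀ i j, κ (bb i) (bb j) = 0)
    (u : CliffordAlgebra (LinearMap.BilinMap.toQuadraticMap κ))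
    (hu : u = ((List.finRange n).map fun j =>
      ι (LinearMap.BilinMap.toQuadraticMap κ) (bb j)).prod)
    (τ τ' : CliffordAlgebra (LinearMap.BilinMap.toQuadraticMap κ))
    (hτ : τ = algebraMap ℂ _ (-((n : ℂ) * Complex.I) / 2) +
      (Complex.I / 2) • ∑ j : Fin n,
        ι (LinearMap.BilinMap.toQuadraticMap κ) (b j) *
          ι (LinearMap.BilinMap.toQuadraticMap κ) (bb j))
    (hτ' : τ' = algebraMap ℂ _ (((n : ℂ) * Complex.I) / 2) -
      (Complex.I / 2) • ∑ j : Fin n,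
        ι (LinearMap.BilinMap.toQuadraticMap κ) (bb j) *
          ι (LinearMap.BilinMap.toQuadraticMap κ) (b j)) :
    τ * u = (-((n : ℂ) * Complex.I) / 2) • u ∧
    u * τ' = (((n : ℂ) * Complex.I) / 2) • u ∧
    τ * u - u * τ' = (-(Complex.I * (n : ℂ))) • u ∧
    τ * u + u * τ' = 0 := by
  have hQ : ∀ i, LinearMap.BilinMap.toQuadraticMap κ (bb i) = 0 := fun i => hbbiso i i
  have horth : ∀ i j, (LinearMap.BilinMap.toQuadraticMap κ).IsOrtho (bb i) (bb j) := fun i j => by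
    rw [← QuadraticMap.isOrtho_polarBilin, QuadraticMap.polarBilin_apply_apply,
      LinearMap.BilinMap.polar_toQuadraticMap, hbbiso, hbbiso, add_zero]
  have hl : ∀ j, ι _ (bb j) * u = 0 := fun j =>
    hu ▸ ι_mul_prod_map_ι_eq_zero_of_mem hQ horth (List.mem_finRange j)
  have hr : ∀ j, u * ι _ (bb j) = 0 := fun j =>
    hu ▸ prod_map_ι_mul_ι_eq_zero_of_mem hQ horth (List.mem_finRange j)
  have hτu : τ * u = (-((n : ℂ) * Complex.I) / 2) • u := by
    simp only [hτ, add_mul, Finset.sum_mul, mul_assoc, hl, mul_zero, Finset.sum_const_zero,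
      add_zero, Algebra.smul_def]
  have huτ' : u * τ' = (((n : ℂ) * Complex.I) / 2) • u := by
    simp only [hτ', mul_sub, Finset.mul_sum, ← mul_assoc, hr, zero_mul, Finset.sum_const_zero,
      sub_zero, Algebra.smul_def, Algebra.commutes]
  refine ⟨hτu, huτ', ?_, ?_⟩
  · rw [hτu, huτ', ← sub_smul]
    ring_nf
  · rw [hτu, huτ', ← add_smul, neg_div, neg_add_cancel, zero_smul]

open CliffordAlgebra in
/-- With `u := ι(b̄_1)···ι(b̄_n)`,
`τ := −(ni/2)·1 + (i/2) Σ_j ι(b_j)ι(b̄_j)` and `τ' := (ni/2)·1 − (i/2) Σ_j ι(b̄_j)ι(b_j)`,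
one has `τ·u = −(ni/2)·u` and `u·τ' = (ni/2)·u`; consequently
`τ·u − u·τ' = −in·u` and `τ·u + u·τ' = 0`. -/
theorem statement10 (V : Type*) [AddCommGroup V] [Module ℂ V] [FiniteDimensional ℂ V]
    (κ : LinearMap.BilinForm ℂ V)
    (hsymm : ∀ x y : V, κ x y = κ y x)
    (hnd : κ.Nondegenerate)
    (n : ℕ) (B : Module.Basis (Fin n ⊕ Fin n) ℂ V)
    (b bb : Fin n → V)
    (hb : ∀ i, b i = B (Sum.inl i)) (hbb : ∀ i, bb i = B (Sum.inr i))
    (hbiso : ∀ i j, κ (b i) (b j) = 0)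
    (hbbiso : ∀ i j, κ (bb i) (bb j) = 0)
    (hpair : ∀ i j, κ (b i) (bb j) = if i = j then (1 : ℂ) else 0)
    (u : CliffordAlgebra (LinearMap.BilinMap.toQuadraticMap κ))
    (hu : u = ((List.finRange n).map fun j =>
      ι (LinearMap.BilinMap.toQuadraticMap κ) (bb j)).prod)
    (τ τ' : CliffordAlgebra (LinearMap.BilinMap.toQuadraticMap κ))
    (hτ : τ = algebraMap ℂ _ (-((n : ℂ) * Complex.I) / 2) +
      (Complex.I / 2) • ∑ j : Fin n,
        ι (LinearMap.BilinMap.toQuadraticMap κ) (b j) *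
          ι (LinearMap.BilinMap.toQuadraticMap κ) (bb j))
    (hτ' : τ' = algebraMap ℂ _ (((n : ℂ) * Complex.I) / 2) -
      (Complex.I / 2) • ∑ j : Fin n,
        ι (LinearMap.BilinMap.toQuadraticMap κ) (bb j) *
          ι (LinearMap.BilinMap.toQuadraticMap κ) (b j)) :
    τ * u = (-((n : ℂ) * Complex.I) / 2) • u ∧
    u * τ' = (((n : ℂ) * Complex.I) / 2) • u ∧
    τ * u - u * τ' = (-(Complex.I * (n : ℂ))) • u ∧
    τ * u + u * τ' = 0 :=
  statement10_general V κ n b bb hbbiso u hu τ τ' hτ hτ'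
end

section
/- For subsets P, Q ⊆ {1,…,n}, let u_{P,Q} := (∏_{j∈P} ι(b_j))·u·(∏_{j∈Q} ι(b_j)), where each product is taken in increasing order of indices. Then τ·u_{P,Q} − u_{P,Q}·τ' = i(|P| + |Q| − n)·u_{P,Q} and τ·u_{P,Q} + u_{P,Q}·τ' = i(|P| − |Q|)·u_{P,Q}. -/
/-!
Write `eⱼ := ι(bⱼ) ι(b̄ⱼ)` and `N := ∑ⱼ eⱼ`. Since `ι(b̄ⱼ) ι(bⱼ) = 2 - eⱼ`, both `τ` and `τ'` equal
`-(n i / 2) + (i / 2) N`, so it suffices that `u_{P,Q}` is an eigenvector of left and of right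
multiplication by `N`. Each `eⱼ` commutes with `ι(b_k)` and `ι(b̄_k)` for `k ≠ j`, while
`eⱼ ι(bⱼ) = 2 ι(bⱼ)`, `ι(bⱼ) eⱼ = 0`, `eⱼ ι(b̄ⱼ) = 0` and `ι(b̄ⱼ) eⱼ = 2 ι(b̄ⱼ)`. Pushing `eⱼ` into
`u_{P,Q}` from the left, it meets `ι(bⱼ)` if `j ∈ P` and is killed by `u` otherwise; from the right
it is killed by `ι(bⱼ)` if `j ∈ Q` and meets `u` otherwise. Hence `N u_{P,Q} = 2|P| u_{P,Q}` and
`u_{P,Q} N = 2(n - |Q|) u_{P,Q}`.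
-/

section ListProd

variable {R A I : Type*} [CommSemiring R] [Semiring A] [Algebra R A] {e : A} {g : I → A} {j : I}

theorem commute_list_prod_map_of_not_mem (hcomm : ∀ k ≠ j, Commute e (g k)) {l : List I}
    (hl : j ∉ l) : Commute e (l.map g).prod :=
  Commute.list_prod_right _ _ <| by
    simp only [List.mem_map]
    rintro _ ⟨k, hk, rfl⟩
    exact hcomm k (ne_of_mem_of_not_mem hk hl)

theorem mul_list_prod_map_of_mem {c : R} (hcomm : ∀ k ≠ j, Commute e (g k))
    (hj : e * g j = c • g j) {l : List I} (hl : j ∈ l) :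
    e * (l.map g).prod = c • (l.map g).prod := by
  induction l with
  | nil => simp at hl
  | cons k l ih =>
    rw [List.map_cons, List.prod_cons, ← mul_assoc]
    by_cases hk : k = j
    · rw [hk, hj, smul_mul_assoc]
    · rw [(hcomm k hk).eq, mul_assoc, ih ((List.mem_cons.1 hl).resolve_left (Ne.symm hk)),
        mul_smul_comm]

theorem list_prod_map_mul_of_mem {c : R} (hcomm : ∀ k ≠ j, Commute e (g k))
    (hj : g j * e = c • g j) {l : List I} (hl : j ∈ l) :
    (l.map g).prod * e = c • (l.map g).prod := by
  induction l with
  | nil => simp at hl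
  | cons k l ih =>
    rw [List.map_cons, List.prod_cons, mul_assoc]
    by_cases hjl : j ∈ l
    · rw [ih hjl, mul_smul_comm]
    · obtain rfl : j = k := (List.mem_cons.1 hl).resolve_right hjl
      rw [← (commute_list_prod_map_of_not_mem hcomm hjl).eq, ← mul_assoc, hj, smul_mul_assoc]

end ListProd

namespace CliffordAlgebra

variable {R M I : Type*} [CommRing R] [AddCommGroup M] [Module R M]

/-- `polar Q (b i) (bb i) = 2` is the normalisation `κ(bᵢ, b̄ᵢ) = 1` when `Q x = κ(x, x)`. -/
structure IsHyperbolicFamily (Q : QuadraticForm R M) (b bb : I → M) : Prop where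
  apply_b : ∀ i, Q (b i) = 0
  apply_bb : ∀ i, Q (bb i) = 0
  isOrtho_b : Pairwise fun i j => Q.IsOrtho (b i) (b j)
  isOrtho_bb : Pairwise fun i j => Q.IsOrtho (bb i) (bb j)
  isOrtho_b_bb : Pairwise fun i j => Q.IsOrtho (b i) (bb j)
  polar_b_bb : ∀ i, QuadraticMap.polar Q (b i) (bb i) = 2

def ιProd (Q : QuadraticForm R M) (v : I → M) (l : List I) : CliffordAlgebra Q :=
  (l.map fun k => ι Q (v k)).prod

namespace IsHyperbolicFamily

variable {Q : QuadraticForm R M} {b bb : I → M} {j : I}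

theorem commute_ι_b (h : IsHyperbolicFamily Q b bb) {k : I} (hkj : k ≠ j) :
    Commute (ι Q (b j) * ι Q (bb j)) (ι Q (b k)) := by
  rw [commute_iff_eq, mul_assoc, ι_mul_ι_comm_of_isOrtho (h.isOrtho_b_bb hkj).symm, mul_neg,
    ← mul_assoc, ι_mul_ι_comm_of_isOrtho (h.isOrtho_b hkj.symm), neg_mul, neg_neg, mul_assoc]

theorem commute_ι_bb (h : IsHyperbolicFamily Q b bb) {k : I} (hkj : k ≠ j) :
    Commute (ι Q (b j) * ι Q (bb j)) (ι Q (bb k)) := by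
  rw [commute_iff_eq, mul_assoc, ι_mul_ι_comm_of_isOrtho (h.isOrtho_bb hkj.symm), mul_neg,
    ← mul_assoc, ι_mul_ι_comm_of_isOrtho (h.isOrtho_b_bb hkj.symm), neg_mul, neg_neg, mul_assoc]

theorem ι_bb_mul_ι_b (h : IsHyperbolicFamily Q b bb) (j : I) :
    ι Q (bb j) * ι Q (b j) = algebraMap R _ 2 - ι Q (b j) * ι Q (bb j) := by
  rw [ι_mul_ι_comm, QuadraticMap.polar_comm, h.polar_b_bb]

theorem mul_ι_b (h : IsHyperbolicFamily Q b bb) (j : I) :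
    ι Q (b j) * ι Q (bb j) * ι Q (b j) = (2 : R) • ι Q (b j) := by
  rw [mul_assoc, h.ι_bb_mul_ι_b, mul_sub, ← mul_assoc, ι_sq_scalar, h.apply_b, map_zero, zero_mul,
    sub_zero, Algebra.smul_def, Algebra.commutes]

theorem ι_b_mul (h : IsHyperbolicFamily Q b bb) (j : I) :
    ι Q (b j) * (ι Q (b j) * ι Q (bb j)) = 0 := by
  rw [← mul_assoc, ι_sq_scalar, h.apply_b, map_zero, zero_mul]

theorem mul_ι_bb (h : IsHyperbolicFamily Q b bb) (j : I) :
    ι Q (b j) * ι Q (bb j) * ι Q (bb j) = 0 := by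
  rw [mul_assoc, ι_sq_scalar, h.apply_bb, map_zero, mul_zero]

theorem ι_bb_mul (h : IsHyperbolicFamily Q b bb) (j : I) :
    ι Q (bb j) * (ι Q (b j) * ι Q (bb j)) = (2 : R) • ι Q (bb j) := by
  rw [← mul_assoc, h.ι_bb_mul_ι_b, sub_mul, mul_assoc, ι_sq_scalar, h.apply_bb, map_zero, mul_zero,
    sub_zero, Algebra.smul_def]

theorem mul_ιProd_b_of_mem (h : IsHyperbolicFamily Q b bb) {l : List I} (hl : j ∈ l) :
    ι Q (b j) * ι Q (bb j) * ιProd Q b l = (2 : R) • ιProd Q b l :=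
  mul_list_prod_map_of_mem (fun _ hk => h.commute_ι_b hk) (h.mul_ι_b j) hl

theorem commute_ιProd_b_of_not_mem (h : IsHyperbolicFamily Q b bb) {l : List I} (hl : j ∉ l) :
    Commute (ι Q (b j) * ι Q (bb j)) (ιProd Q b l) :=
  commute_list_prod_map_of_not_mem (fun _ hk => h.commute_ι_b hk) hl

theorem ιProd_b_mul_of_mem (h : IsHyperbolicFamily Q b bb) {l : List I} (hl : j ∈ l) :
    ιProd Q b l * (ι Q (b j) * ι Q (bb j)) = 0 :=
  (list_prod_map_mul_of_mem (fun _ hk => h.commute_ι_b hk)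
    ((h.ι_b_mul j).trans (zero_smul R _).symm) hl).trans (zero_smul R _)

theorem mul_ιProd_bb_of_mem (h : IsHyperbolicFamily Q b bb) {l : List I} (hl : j ∈ l) :
    ι Q (b j) * ι Q (bb j) * ιProd Q bb l = 0 :=
  (mul_list_prod_map_of_mem (fun _ hk => h.commute_ι_bb hk)
    ((h.mul_ι_bb j).trans (zero_smul R _).symm) hl).trans (zero_smul R _)

theorem ιProd_bb_mul_of_mem (h : IsHyperbolicFamily Q b bb) {l : List I} (hl : j ∈ l) :
    ιProd Q bb l * (ι Q (b j) * ι Q (bb j)) = (2 : R) • ιProd Q bb l :=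
  list_prod_map_mul_of_mem (fun _ hk => h.commute_ι_bb hk) (h.ι_bb_mul j) hl

theorem mul_ιProd_mul_ιProd_mul_ιProd [DecidableEq I] (h : IsHyperbolicFamily Q b bb)
    (p q : List I) {l : List I} (hl : j ∈ l) :
    ι Q (b j) * ι Q (bb j) * (ιProd Q b p * ιProd Q bb l * ιProd Q b q) =
      if j ∈ p then (2 : R) • (ιProd Q b p * ιProd Q bb l * ιProd Q b q) else 0 := by
  rw [← mul_assoc, ← mul_assoc]
  split_ifs with hp
  · rw [h.mul_ιProd_b_of_mem hp, smul_mul_assoc, smul_mul_assoc]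
  · rw [(h.commute_ιProd_b_of_not_mem hp).eq, mul_assoc _ _ (ιProd Q bb l),
      h.mul_ιProd_bb_of_mem hl, mul_zero, zero_mul]

theorem ιProd_mul_ιProd_mul_ιProd_mul [DecidableEq I] (h : IsHyperbolicFamily Q b bb)
    (p q : List I) {l : List I} (hl : j ∈ l) :
    ιProd Q b p * ιProd Q bb l * ιProd Q b q * (ι Q (b j) * ι Q (bb j)) =
      if j ∈ q then 0 else (2 : R) • (ιProd Q b p * ιProd Q bb l * ιProd Q b q) := by
  rw [mul_assoc]
  split_ifs with hq
  · rw [h.ιProd_b_mul_of_mem hq, mul_zero]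
  · rw [← (h.commute_ιProd_b_of_not_mem hq).eq, ← mul_assoc, mul_assoc _ (ιProd Q bb l),
      h.ιProd_bb_mul_of_mem hl, mul_smul_comm, smul_mul_assoc]

variable [Fintype I]

theorem sum_ι_bb_mul_ι_b (h : IsHyperbolicFamily Q b bb) :
    ∑ j, ι Q (bb j) * ι Q (b j) =
      algebraMap R _ (2 * Fintype.card I) - ∑ j, ι Q (b j) * ι Q (bb j) := by
  rw [Finset.sum_congr rfl fun j _ => h.ι_bb_mul_ι_b j, Finset.sum_sub_distrib, Finset.sum_const,
    Finset.card_univ, ← Nat.cast_smul_eq_nsmul R, Algebra.smul_def, ← map_mul, mul_comm]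

variable [LinearOrder I]

theorem sum_mul_ιProd_mul_ιProd_mul_ιProd (h : IsHyperbolicFamily Q b bb) (s t : Finset I)
    {l : List I} (hl : ∀ j, j ∈ l) :
    (∑ j, ι Q (b j) * ι Q (bb j)) * (ιProd Q b (s.sort) * ιProd Q bb l * ιProd Q b (t.sort)) =
      (2 * s.card : R) • (ιProd Q b (s.sort) * ιProd Q bb l * ιProd Q b (t.sort)) := by
  simp only [Finset.sum_mul, h.mul_ιProd_mul_ιProd_mul_ιProd _ _ (hl _), Finset.mem_sort]
  rw [Finset.sum_ite_mem, Finset.univ_inter, Finset.sum_const, ← Nat.cast_smul_eq_nsmul R,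
    smul_smul, mul_comm]

theorem ιProd_mul_ιProd_mul_ιProd_mul_sum (h : IsHyperbolicFamily Q b bb) (s t : Finset I)
    {l : List I} (hl : ∀ j, j ∈ l) :
    ιProd Q b (s.sort) * ιProd Q bb l * ιProd Q b (t.sort) * (∑ j, ι Q (b j) * ι Q (bb j)) =
      (2 * (Fintype.card I - t.card : R)) •
        (ιProd Q b (s.sort) * ιProd Q bb l * ιProd Q b (t.sort)) := by
  simp only [Finset.mul_sum, h.ιProd_mul_ιProd_mul_ιProd_mul _ _ (hl _), Finset.mem_sort]
  rw [Finset.sum_ite, Finset.sum_const_zero, zero_add, Finset.sum_const, Finset.filter_not,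
    Finset.filter_mem_eq_inter, Finset.univ_inter, ← Finset.compl_eq_univ_sdiff,
    Finset.card_compl, ← Nat.cast_smul_eq_nsmul R, Nat.cast_sub t.card_le_univ, smul_smul,
    mul_comm]

end IsHyperbolicFamily

end CliffordAlgebra

namespace LinearMap.BilinForm

variable {R M I : Type*} [CommRing R] [AddCommGroup M] [Module R M] [DecidableEq I]
  {κ : LinearMap.BilinForm R M}

theorem isOrtho_toQuadraticMap_of_eq_zero {x y : M} (hxy : κ x y = 0) (hyx : κ y x = 0) :
    (BilinMap.toQuadraticMap κ).IsOrtho x y := by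
  rw [← QuadraticMap.isOrtho_polarBilin, QuadraticMap.polarBilin_apply_apply,
    BilinMap.polar_toQuadraticMap, hxy, hyx, add_zero]

theorem isHyperbolicFamily_toQuadraticMap (hsymm : ∀ x y : M, κ x y = κ y x) {b bb : I → M}
    (hb : ∀ i j, κ (b i) (b j) = 0) (hbb : ∀ i j, κ (bb i) (bb j) = 0)
    (hpair : ∀ i j, κ (b i) (bb j) = if i = j then (1 : R) else 0) :
    CliffordAlgebra.IsHyperbolicFamily (BilinMap.toQuadraticMap κ) b bb where
  apply_b i := hb i i
  apply_bb i := hbb i i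
  isOrtho_b i j _ := isOrtho_toQuadraticMap_of_eq_zero (hb i j) (hb j i)
  isOrtho_bb i j _ := isOrtho_toQuadraticMap_of_eq_zero (hbb i j) (hbb j i)
  isOrtho_b_bb i j hij := isOrtho_toQuadraticMap_of_eq_zero (by simp [hpair, hij])
    (by simp [hsymm, hpair, hij])
  polar_b_bb i := by simp [BilinMap.polar_toQuadraticMap, hsymm (bb i), hpair, one_add_one_eq_two]

end LinearMap.BilinForm

open CliffordAlgebra in
theorem statement11_general (V : Type*) [AddCommGroup V] [Module ℂ V]
    (κ : LinearMap.BilinForm ℂ V)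
    (hsymm : ∀ x y : V, κ x y = κ y x)
    (n : ℕ)
    (b bb : Fin n → V)
    (hbiso : ∀ i j, κ (b i) (b j) = 0)
    (hbbiso : ∀ i j, κ (bb i) (bb j) = 0)
    (hpair : ∀ i j, κ (b i) (bb j) = if i = j then (1 : ℂ) else 0)
    (u : CliffordAlgebra (LinearMap.BilinMap.toQuadraticMap κ))
    (hu : u = ((List.finRange n).map fun j =>
      ι (LinearMap.BilinMap.toQuadraticMap κ) (bb j)).prod)
    (τ τ' : CliffordAlgebra (LinearMap.BilinMap.toQuadraticMap κ))
    (hτ : τ = algebraMap ℂ _ (-((n : ℂ) * Complex.I) / 2) +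
      (Complex.I / 2) • ∑ j : Fin n,
        ι (LinearMap.BilinMap.toQuadraticMap κ) (b j) *
          ι (LinearMap.BilinMap.toQuadraticMap κ) (bb j))
    (hτ' : τ' = algebraMap ℂ _ (((n : ℂ) * Complex.I) / 2) -
      (Complex.I / 2) • ∑ j : Fin n,
        ι (LinearMap.BilinMap.toQuadraticMap κ) (bb j) *
          ι (LinearMap.BilinMap.toQuadraticMap κ) (b j))
    (U : Finset (Fin n) → Finset (Fin n) → CliffordAlgebra (LinearMap.BilinMap.toQuadraticMap κ))
    (hU : ∀ P Q : Finset (Fin n), U P Q =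
      ((P.sort (· ≤ ·)).map fun j =>
        ι (LinearMap.BilinMap.toQuadraticMap κ) (b j)).prod * u *
      ((Q.sort (· ≤ ·)).map fun j =>
        ι (LinearMap.BilinMap.toQuadraticMap κ) (b j)).prod) :
    ∀ P Q : Finset (Fin n),
      τ * U P Q - U P Q * τ' =
        (Complex.I * ((P.card : ℂ) + (Q.card : ℂ) - (n : ℂ))) • U P Q ∧
      τ * U P Q + U P Q * τ' =
        (Complex.I * ((P.card : ℂ) - (Q.card : ℂ))) • U P Q := by
  have hfam := LinearMap.BilinForm.isHyperbolicFamily_toQuadraticMap hsymm hbiso hbbiso hpair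
  have hτ'τ : τ' = τ := by
    rw [hτ', hfam.sum_ι_bb_mul_ι_b, hτ, smul_sub, Algebra.smul_def (Complex.I / 2), ← map_mul,
      sub_sub_eq_add_sub, add_sub_right_comm, ← map_sub, Fintype.card_fin]
    congr 2
    ring
  intro P Q
  have hUPQ : U P Q = ιProd _ b (P.sort (· ≤ ·)) * ιProd _ bb (List.finRange n) *
      ιProd _ b (Q.sort (· ≤ ·)) := by
    rw [hU, hu]
    rfl
  have hτU : τ * U P Q = (Complex.I * P.card - n * Complex.I / 2) • U P Q := by
    rw [hτ, add_mul, smul_mul_assoc, hUPQ,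
      hfam.sum_mul_ιProd_mul_ιProd_mul_ιProd _ _ List.mem_finRange, ← Algebra.smul_def, smul_smul,
      ← add_smul]
    congr 1
    ring
  have hUτ : U P Q * τ = (n * Complex.I / 2 - Complex.I * Q.card) • U P Q := by
    rw [hτ, mul_add, mul_smul_comm, hUPQ,
      hfam.ιProd_mul_ιProd_mul_ιProd_mul_sum _ _ List.mem_finRange, ← Algebra.commutes,
      ← Algebra.smul_def, smul_smul, ← add_smul, Fintype.card_fin]
    congr 1
    ring
  rw [hτ'τ, hτU, hUτ, ← sub_smul, ← add_smul]
  constructor <;> congr 1 <;> ring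

open CliffordAlgebra in
/-- For subsets `P, Q ⊆ {1,…,n}`, let
`u_{P,Q} := (∏_{j∈P} ι(b_j))·u·(∏_{j∈Q} ι(b_j))` (products in increasing index order).
Then `τ·u_{P,Q} − u_{P,Q}·τ' = i(|P| + |Q| − n)·u_{P,Q}` and
`τ·u_{P,Q} + u_{P,Q}·τ' = i(|P| − |Q|)·u_{P,Q}`. -/
theorem statement11 (V : Type*) [AddCommGroup V] [Module ℂ V] [FiniteDimensional ℂ V]
    (κ : LinearMap.BilinForm ℂ V)
    (hsymm : ∀ x y : V, κ x y = κ y x)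
    (hnd : κ.Nondegenerate)
    (n : ℕ) (B : Module.Basis (Fin n ⊕ Fin n) ℂ V)
    (b bb : Fin n → V)
    (hb : ∀ i, b i = B (Sum.inl i)) (hbb : ∀ i, bb i = B (Sum.inr i))
    (hbiso : ∀ i j, κ (b i) (b j) = 0)
    (hbbiso : ∀ i j, κ (bb i) (bb j) = 0)
    (hpair : ∀ i j, κ (b i) (bb j) = if i = j then (1 : ℂ) else 0)
    (u : CliffordAlgebra (LinearMap.BilinMap.toQuadraticMap κ))
    (hu : u = ((List.finRange n).map fun j =>
      ι (LinearMap.BilinMap.toQuadraticMap κ) (bb j)).prod)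
    (τ τ' : CliffordAlgebra (LinearMap.BilinMap.toQuadraticMap κ))
    (hτ : τ = algebraMap ℂ _ (-((n : ℂ) * Complex.I) / 2) +
      (Complex.I / 2) • ∑ j : Fin n,
        ι (LinearMap.BilinMap.toQuadraticMap κ) (b j) *
          ι (LinearMap.BilinMap.toQuadraticMap κ) (bb j))
    (hτ' : τ' = algebraMap ℂ _ (((n : ℂ) * Complex.I) / 2) -
      (Complex.I / 2) • ∑ j : Fin n,
        ι (LinearMap.BilinMap.toQuadraticMap κ) (bb j) *
          ι (LinearMap.BilinMap.toQuadraticMap κ) (b j))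
    (U : Finset (Fin n) → Finset (Fin n) → CliffordAlgebra (LinearMap.BilinMap.toQuadraticMap κ))
    (hU : ∀ P Q : Finset (Fin n), U P Q =
      ((P.sort (· ≤ ·)).map fun j =>
        ι (LinearMap.BilinMap.toQuadraticMap κ) (b j)).prod * u *
      ((Q.sort (· ≤ ·)).map fun j =>
        ι (LinearMap.BilinMap.toQuadraticMap κ) (b j)).prod) :
    ∀ P Q : Finset (Fin n),
      τ * U P Q - U P Q * τ' =
        (Complex.I * ((P.card : ℂ) + (Q.card : ℂ) - (n : ℂ))) • U P Q ∧
      τ * U P Q + U P Q * τ' =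
        (Complex.I * ((P.card : ℂ) - (Q.card : ℂ))) • U P Q :=
  statement11_general V κ hsymm n b bb hbiso hbbiso hpair u hu τ τ' hτ hτ' U hU
end
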